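/- arXiv:2503.14039 — 10 statements merged into one kernel-verified Lean document; each statement's English description precedes it below -/
import Mathlib

section
/- For every function f : M → M on a finite set M and every integer m ≥ 1, one has m · D_m(f) = ∑_{d ∣ m} μ(m/d) · #Fix(f^[d]), where μ is the Möbius function and the sum runs over the positive divisors d of m. In particular the right-hand side is a nonnegative multiple of m. -/
/-- The orbit `{x, f x, …, f^[m-1] x}` as a finset. -/
def IsPeriodicOrbit {M : Type*} [DecidableEq M] (f : M → M) (m : ℕ) (s : Finset M) : Prop :=
  ∃ x : M, s = (Finset.range m).image (fun i => f^[i] x) ∧ s.card = m ∧ f^[m] x = x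

/-- `doldD f m` is the number of periodic orbits of `f` of length `m`. -/
noncomputable def doldD {M : Type*} [Fintype M] [DecidableEq M] (f : M → M) (m : ℕ) : ℕ :=
  Nat.card {s : Finset M // IsPeriodicOrbit f m s}

open Function Finset

section aux_dold

variable {M : Type*} [Fintype M] [DecidableEq M] (f : M → M)

/-- The orbit finset. -/
private def orbF (m : ℕ) (x : M) : Finset M := (Finset.range m).image (fun i => f^[i] x)

private lemma mp_iterate (x : M) (hx : x ∈ periodicPts f) (j : ℕ) :
    minimalPeriod f (f^[j] x) = minimalPeriod f x := by
  induction j with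
  | zero => rfl
  | succ n ih =>
    have hmem : f^[n] x ∈ periodicPts f := by
      rw [← minimalPeriod_pos_iff_mem_periodicPts, ih]
      exact minimalPeriod_pos_of_mem_periodicPts hx
    rw [Function.iterate_succ_apply', minimalPeriod_apply hmem, ih]

private lemma mp_of_witness {m : ℕ} (hm : 1 ≤ m) {x : M}
    (hcard : (orbF f m x).card = m) (hfix : f^[m] x = x) :
    minimalPeriod f x = m := by
  have hper : IsPeriodicPt f m x := hfix
  have hdvd : minimalPeriod f x ∣ m := hper.minimalPeriod_dvd
  have hpos : 0 < minimalPeriod f x := hper.minimalPeriod_pos hm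
  refine le_antisymm (Nat.le_of_dvd hm hdvd) ?_
  have hsub : orbF f m x ⊆ (Finset.range (minimalPeriod f x)).image (fun i => f^[i] x) := by
    intro y hy
    simp only [orbF, Finset.mem_image, Finset.mem_range] at hy ⊢
    obtain ⟨i, _, rfl⟩ := hy
    exact ⟨i % minimalPeriod f x, Nat.mod_lt _ hpos, iterate_mod_minimalPeriod_eq⟩
  calc m = (orbF f m x).card := hcard.symm
    _ ≤ _ := Finset.card_le_card hsub
    _ ≤ (Finset.range (minimalPeriod f x)).card := Finset.card_image_le
    _ = minimalPeriod f x := Finset.card_range _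

/-- Every point of a periodic orbit has minimal period `m` and generates the same orbit. -/
private lemma mem_orbit_props {m : ℕ} (hm : 1 ≤ m) {x : M}
    (hcard : (orbF f m x).card = m) (hfix : f^[m] x = x) {j : ℕ} (hj : j < m) :
    minimalPeriod f (f^[j] x) = m ∧ orbF f m (f^[j] x) = orbF f m x := by
  have hperpt : x ∈ periodicPts f := mk_mem_periodicPts hm hfix
  have hmp : minimalPeriod f x = m := mp_of_witness f hm hcard hfix
  have hmpj : minimalPeriod f (f^[j] x) = m := by rw [mp_iterate f x hperpt, hmp]
  refine ⟨hmpj, ?_⟩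
  -- helper: iterate reduction mod m at x
  have hiter : ∀ k, f^[k] x = f^[k % m] x := fun k => by
    conv_lhs => rw [← iterate_mod_minimalPeriod_eq (n := k)]
    rw [hmp]
  apply Finset.Subset.antisymm
  · intro y hy
    simp only [orbF, Finset.mem_image, Finset.mem_range] at hy ⊢
    obtain ⟨i, _, rfl⟩ := hy
    rw [← Function.iterate_add_apply, hiter (i + j)]
    exact ⟨(i + j) % m, Nat.mod_lt _ hm, rfl⟩
  · intro y hy
    simp only [orbF, Finset.mem_image, Finset.mem_range] at hy ⊢
    obtain ⟨i, _, rfl⟩ := hy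
    refine ⟨(i + (m - j)) % m, Nat.mod_lt _ hm, ?_⟩
    have h1 : f^[(i + (m - j)) % m] (f^[j] x) = f^[(i + (m - j)) % m + j % m] x := by
      rw [Function.iterate_add_apply, ← hiter j]
    rw [h1, hiter ((i + (m - j)) % m + j % m), ← Nat.add_mod, hiter i]
    have : i + (m - j) + j = i + m := by omega
    rw [this, Nat.add_mod_right]

open scoped Classical in
private lemma countA (m : ℕ) (hm : 1 ≤ m) :
    (Finset.univ.filter fun x : M => minimalPeriod f x = m).card = m * doldD f m := by
  set A := Finset.univ.filter fun x : M => minimalPeriod f x = m with hA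
  set S := Finset.univ.filter fun s : Finset M => IsPeriodicOrbit f m s with hS
  have hmap : ∀ x ∈ A, orbF f m x ∈ S := by
    intro x hx
    rw [hA, Finset.mem_filter] at hx
    have hmp := hx.2
    have hfix : f^[m] x = x := by rw [← hmp]; exact iterate_minimalPeriod
    have hcard : (orbF f m x).card = m := by
      rw [orbF, Finset.card_image_of_injOn, Finset.card_range]
      intro a ha b hb hab
      rw [Finset.coe_range, Set.mem_Iio] at ha hb
      exact iterate_injOn_Iio_minimalPeriod (by rw [hmp]; exact ha) (by rw [hmp]; exact hb) hab
    exact Finset.mem_filter.2 ⟨Finset.mem_univ _, x, rfl, hcard, hfix⟩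
  have hsum := Finset.card_eq_sum_card_fiberwise hmap
  have hfiber : ∀ s ∈ S, (A.filter fun x => orbF f m x = s) = s := by
    intro s hs
    rw [hS, Finset.mem_filter] at hs
    obtain ⟨-, x, hsx, hcard, hfix⟩ := hs
    have hcard' : (orbF f m x).card = m := by rw [← orbF] at hsx; rw [← hsx]; exact hcard
    ext y
    simp only [Finset.mem_filter, hA, Finset.mem_univ, true_and]
    constructor
    · rintro ⟨-, rfl⟩
      simp only [orbF, Finset.mem_image, Finset.mem_range]
      exact ⟨0, hm, rfl⟩
    · intro hy
      rw [hsx, ← orbF] at hy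
      simp only [orbF, Finset.mem_image, Finset.mem_range] at hy
      obtain ⟨j, hj, rfl⟩ := hy
      obtain ⟨h1, h2⟩ := mem_orbit_props f hm hcard' hfix hj
      rw [hsx, ← orbF]
      exact ⟨h1, h2⟩
  have hcards : ∀ s ∈ S, s.card = m := by
    intro s hs
    rw [hS, Finset.mem_filter] at hs
    obtain ⟨-, x, hsx, hcard, -⟩ := hs
    exact hcard
  have hdold : doldD f m = S.card := by
    rw [doldD, Nat.card_eq_fintype_card, Fintype.card_subtype]
  rw [hsum, Finset.sum_congr rfl fun s hs => by rw [hfiber s hs, hcards s hs],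
    Finset.sum_const, smul_eq_mul, hdold, Nat.mul_comm]

open scoped Classical in
private lemma countFix (d : ℕ) (hd : 0 < d) :
    (Nat.card {x : M // f^[d] x = x}) =
      ∑ e ∈ d.divisors, (Finset.univ.filter fun x : M => minimalPeriod f x = e).card := by
  have h1 : (Nat.card {x : M // f^[d] x = x})
      = (Finset.univ.filter fun x : M => f^[d] x = x).card := by
    rw [Nat.card_eq_fintype_card, Fintype.card_subtype]
  rw [h1]
  have hmap : ∀ x ∈ (Finset.univ.filter fun x : M => f^[d] x = x),
      minimalPeriod f x ∈ d.divisors := by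
    intro x hx
    rw [Finset.mem_filter] at hx
    have hper : IsPeriodicPt f d x := hx.2
    exact Nat.mem_divisors.2 ⟨hper.minimalPeriod_dvd, hd.ne'⟩
  rw [Finset.card_eq_sum_card_fiberwise hmap]
  refine Finset.sum_congr rfl fun e he => ?_
  congr 1
  ext x
  simp only [Finset.mem_filter, Finset.mem_univ, true_and, and_iff_right_iff_imp]
  intro hx
  have hdvd : minimalPeriod f x ∣ d := by rw [hx]; exact (Nat.mem_divisors.1 he).1
  exact isPeriodicPt_iff_minimalPeriod_dvd.2 hdvd

end aux_dold

open ArithmeticFunction ArithmeticFunction.Moebius in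
theorem mul_doldD_eq_sum_moebius_fixedPoints
    {M : Type*} [Fintype M] [DecidableEq M] (f : M → M) (m : ℕ) (hm : 1 ≤ m) :
    (m * doldD f m : ℤ) =
      ∑ d ∈ m.divisors, μ (m / d) * (Nat.card {x : M // f^[d] x = x} : ℤ) := by
  classical
  have key := (sum_eq_iff_sum_mul_moebius_eq (R := ℤ)
    (f := fun e => ((Finset.univ.filter fun x : M => minimalPeriod f x = e).card : ℤ))
    (g := fun d => (Nat.card {x : M // f^[d] x = x} : ℤ))).1 ?_ m hm
  · simp only [Int.cast_id] at key
    rw [Nat.sum_divisorsAntidiagonal'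
      (f := fun a b => (μ a : ℤ) * (Nat.card {x : M // f^[b] x = x} : ℤ))] at key
    rw [key]
    exact_mod_cast (countA f m hm).symm
  · intro n hn
    rw [← Nat.cast_sum]
    norm_cast
    exact (countFix f n hn).symm
end

section
/- For every function f : M → M on a finite set M, the following identity holds in the ring ℚ[[q]] of formal power series: ∏_{m=1}^{#M} (1 − q^m)^{D_m(f)} = exp( − ∑_{k ≥ 1} (#Fix(f^[k]) / k) · q^k ), where exp denotes the formal power-series exponential. -/
/-- The formal power-series exponential `exp F = ∑_{j ≥ 0} F^j / j!` of a power series `F`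
with zero constant term: for such `F`, the coefficient of `q^k` in `F^j` vanishes for `j > k`,
so the coefficient of `q^k` in `exp F` is the (finite) sum below. -/
noncomputable def PowerSeries.expOf (F : PowerSeries ℚ) : PowerSeries ℚ :=
  PowerSeries.mk fun k =>
    ∑ j ∈ Finset.range (k + 1), (PowerSeries.coeff k (F ^ j)) / (j.factorial : ℚ)

open Finset Function

section Comb

variable {M : Type*} [Fintype M] [DecidableEq M] (f : M → M)

private def orb (f : M → M) (m : ℕ) (x : M) : Finset M :=
  (Finset.range m).image (fun i => f^[i] x)

private lemma mem_orb_self {m : ℕ} (hm : 0 < m) (x : M) : x ∈ orb f m x := by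
  simp only [orb, Finset.mem_image, Finset.mem_range]
  exact ⟨0, hm, rfl⟩

private lemma periodic_of_mem_orb {m : ℕ} {x y : M} (hx : f^[m] x = x)
    (hy : y ∈ orb f m x) : f^[m] y = y := by
  simp only [orb, Finset.mem_image, Finset.mem_range] at hy
  obtain ⟨i, _, rfl⟩ := hy
  rw [← Function.iterate_add_apply, Nat.add_comm, Function.iterate_add_apply, hx]

private lemma orb_eq_of_mem {m : ℕ} (hm : 0 < m) {x y : M} (hx : f^[m] x = x)
    (hy : y ∈ orb f m x) : orb f m y = orb f m x := by
  have hmy : f^[m] y = y := periodic_of_mem_orb f hx hy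
  obtain ⟨i, hi, rfl⟩ : ∃ i, i < m ∧ f^[i] x = y := by
    simp only [orb, Finset.mem_image, Finset.mem_range] at hy; tauto
  have hxp : IsPeriodicPt f m x := hx
  have hyp : IsPeriodicPt f m (f^[i] x) := hmy
  apply Finset.Subset.antisymm
  · intro z hz
    simp only [orb, Finset.mem_image, Finset.mem_range] at hz ⊢
    obtain ⟨j, hj, rfl⟩ := hz
    refine ⟨(j + i) % m, Nat.mod_lt _ hm, ?_⟩
    rw [hxp.iterate_mod_apply, Function.iterate_add_apply]
  · intro z hz
    simp only [orb, Finset.mem_image, Finset.mem_range] at hz ⊢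
    obtain ⟨j, hj, rfl⟩ := hz
    refine ⟨(j + (m - i)) % m, Nat.mod_lt _ hm, ?_⟩
    rw [hyp.iterate_mod_apply, Function.iterate_add_apply,
      ← Function.iterate_add_apply f (m - i) i, Nat.sub_add_cancel hi.le, hx]

private lemma card_orb_minimalPeriod (x : M) :
    (orb f (minimalPeriod f x) x).card = minimalPeriod f x := by
  rw [orb, Finset.card_image_of_injOn, Finset.card_range]
  intro a ha b hb hab
  exact iterate_injOn_Iio_minimalPeriod (by simpa using ha) (by simpa using hb) hab

private lemma orbit_spec {m : ℕ} {s : Finset M} (hs : IsPeriodicOrbit f m s) (hm : 0 < m)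
    {y : M} (hy : y ∈ s) :
    f^[m] y = y ∧ minimalPeriod f y = m ∧ s = orb f (minimalPeriod f y) y := by
  obtain ⟨x, rfl, hcard, hx⟩ := hs
  have hy' : y ∈ orb f m x := hy
  have hmy : f^[m] y = y := periodic_of_mem_orb f hx hy'
  have hsy : orb f m y = orb f m x := orb_eq_of_mem f hm hx hy'
  have hpt : IsPeriodicPt f m y := hmy
  have hple : minimalPeriod f y ≤ m := Nat.le_of_dvd hm hpt.minimalPeriod_dvd
  have hsub : orb f m y ⊆ orb f (minimalPeriod f y) y := by
    intro z hz
    simp only [orb, Finset.mem_image, Finset.mem_range] at hz ⊢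
    obtain ⟨j, hj, rfl⟩ := hz
    have hp0 : 0 < minimalPeriod f y := hpt.minimalPeriod_pos hm
    exact ⟨j % minimalPeriod f y, Nat.mod_lt _ hp0,
      (isPeriodicPt_minimalPeriod f y).iterate_mod_apply j⟩
  have hcard' : (orb f m x).card = m := hcard
  have : m ≤ minimalPeriod f y := by
    calc m = (orb f m y).card := by rw [hsy, hcard']
    _ ≤ (orb f (minimalPeriod f y) y).card := Finset.card_le_card hsub
    _ = minimalPeriod f y := card_orb_minimalPeriod f y
  have hpm : minimalPeriod f y = m := le_antisymm hple this
  refine ⟨hmy, hpm, ?_⟩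
  rw [hpm, hsy]; rfl

theorem fix_card (k : ℕ) (hk : 0 < k) :
    Nat.card {x : M // f^[k] x = x}
      = ∑ m ∈ (Finset.Icc 1 (Fintype.card M)).filter (· ∣ k), m * doldD f m := by
  classical
  set N := Fintype.card M with hN
  set Fixk : Finset M := univ.filter (fun x => f^[k] x = x) with hFixk
  set P : Finset M → Prop := fun s => ∃ m, m ∈ Finset.Icc 1 N ∧ m ∣ k ∧ IsPeriodicOrbit f m s
    with hP
  set Orbs : Finset (Finset M) := univ.filter P with hOrbs
  set g : M → Finset M := fun x => orb f (minimalPeriod f x) x with hg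
  have hNat : Nat.card {x : M // f^[k] x = x} = Fixk.card := by
    rw [Nat.card_eq_fintype_card, Fintype.card_subtype, hFixk]
  have hdold : ∀ m : ℕ, doldD f m
      = (univ.filter (fun s : Finset M => IsPeriodicOrbit f m s)).card := by
    intro m
    rw [doldD, Nat.card_eq_fintype_card, Fintype.card_subtype]
  have hmaps : ∀ x ∈ Fixk, g x ∈ Orbs := by
    intro x hx
    rw [hFixk, Finset.mem_filter] at hx
    have hpt : IsPeriodicPt f k x := hx.2
    have hp0 : 0 < minimalPeriod f x := hpt.minimalPeriod_pos hk
    have hcard : (g x).card = minimalPeriod f x := card_orb_minimalPeriod f x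
    refine Finset.mem_filter.mpr ⟨Finset.mem_univ _, minimalPeriod f x, ?_, ?_, ?_⟩
    · refine Finset.mem_Icc.mpr ⟨hp0, ?_⟩
      calc minimalPeriod f x = (g x).card := hcard.symm
      _ ≤ N := Finset.card_le_univ _
    · exact hpt.minimalPeriod_dvd
    · exact ⟨x, rfl, hcard, isPeriodicPt_minimalPeriod f x⟩
  have hfiber : ∀ s ∈ Orbs, Fixk.filter (fun x => g x = s) = s := by
    intro s hs
    rw [hOrbs, Finset.mem_filter] at hs
    obtain ⟨-, m, hmIcc, hmk, horb⟩ := hs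
    have hm0 : 0 < m := (Finset.mem_Icc.mp hmIcc).1
    ext x
    simp only [Finset.mem_filter, hFixk]
    constructor
    · rintro ⟨⟨-, hxfix⟩, rfl⟩
      have hpt : IsPeriodicPt f k x := hxfix
      exact mem_orb_self f (hpt.minimalPeriod_pos hk) x
    · intro hx
      obtain ⟨hmx, hpm, hsorb⟩ := orbit_spec f horb hm0 hx
      have hpt : IsPeriodicPt f m x := hmx
      refine ⟨⟨Finset.mem_univ _, (hpt.trans_dvd hmk :)⟩, hsorb.symm⟩
  have hcards : ∀ s ∈ Orbs, s.card ∈ (Finset.Icc 1 N).filter (· ∣ k) := by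
    intro s hs
    rw [hOrbs, Finset.mem_filter] at hs
    obtain ⟨-, m, hmIcc, hmk, horb⟩ := hs
    obtain ⟨x, rfl, hcard, hx⟩ := horb
    rw [hcard]
    exact Finset.mem_filter.mpr ⟨hmIcc, hmk⟩
  have step1 : Fixk.card = ∑ s ∈ Orbs, s.card := by
    rw [Finset.card_eq_sum_card_fiberwise hmaps]
    exact Finset.sum_congr rfl fun s hs => by rw [hfiber s hs]
  have step2 : ∑ s ∈ Orbs, s.card
      = ∑ m ∈ (Finset.Icc 1 N).filter (· ∣ k), ∑ s ∈ Orbs.filter (fun s => s.card = m), s.card :=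
    (Finset.sum_fiberwise_of_maps_to hcards _).symm
  have step3 : ∀ m ∈ (Finset.Icc 1 N).filter (· ∣ k),
      Orbs.filter (fun s => s.card = m) = univ.filter (fun s => IsPeriodicOrbit f m s) := by
    intro m hm
    rw [Finset.mem_filter] at hm
    ext s
    simp only [Finset.mem_filter, Finset.mem_univ, true_and, hOrbs, hP]
    constructor
    · rintro ⟨⟨m', hm'Icc, hm'k, horb⟩, hcard⟩
      obtain ⟨x, hseq, hcard', hx⟩ := horb
      have hmm : m' = m := hcard'.symm.trans hcard
      subst hmm; exact ⟨x, hseq, hcard', hx⟩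
    · intro horb
      obtain ⟨x, hseq, hcard', hx⟩ := horb
      exact ⟨⟨m, hm.1, hm.2, ⟨x, hseq, hcard', hx⟩⟩, hcard'⟩
  rw [hNat, step1, step2]
  refine Finset.sum_congr rfl fun m hm => ?_
  rw [step3 m hm, hdold m]
  rw [Finset.sum_congr rfl (fun s hs => ?_), Finset.sum_const, smul_eq_mul, Nat.mul_comm]
  rw [Finset.mem_filter] at hs
  obtain ⟨x, -, hcard, -⟩ := hs.2
  exact hcard

end Comb


open Finset PowerSeries

section PS

private lemma coeff_pow_zero {F : PowerSeries ℚ} (hF : constantCoeff F = 0)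
    {k j : ℕ} (h : k < j) : coeff k (F ^ j) = 0 := by
  have hX : (X : PowerSeries ℚ) ∣ F := X_dvd_iff.mpr hF
  exact (X_pow_dvd_iff.mp (pow_dvd_pow_of_dvd hX j)) k h

private lemma constantCoeff_expOf (F : PowerSeries ℚ) :
    constantCoeff (expOf F) = 1 := by
  rw [← coeff_zero_eq_constantCoeff_apply]
  simp [expOf]

private lemma derivative_expOf {F : PowerSeries ℚ} (hF : constantCoeff F = 0) :
    d⁄dX ℚ (expOf F) = d⁄dX ℚ F * expOf F := by
  have key : ∀ j k : ℕ, coeff (k + 1) (F ^ (j + 1)) * ((k : ℚ) + 1)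
      = ((j : ℚ) + 1) * coeff k (d⁄dX ℚ F * F ^ j) := by
    intro j k
    have h := Derivation.leibniz_pow (d⁄dX ℚ) (a := F) (j + 1)
    rw [Nat.add_sub_cancel, smul_eq_mul] at h
    have h2 := congrArg (coeff k) h
    rw [coeff_derivative, map_nsmul, nsmul_eq_mul, mul_comm (F ^ j)] at h2
    push_cast at h2
    exact h2
  ext k
  rw [coeff_derivative, coeff_mul]
  have hexp : ∀ n : ℕ, coeff n (expOf F)
      = ∑ j ∈ Finset.range (n + 1), coeff n (F ^ j) / (j.factorial : ℚ) := fun n =>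
    coeff_mk n _
  calc (coeff (k + 1)) (expOf F) * ((k : ℚ) + 1)
      = ∑ j ∈ Finset.range (k + 1),
          coeff (k + 1) (F ^ (j + 1)) / ((j + 1).factorial : ℚ) * ((k : ℚ) + 1) := by
        rw [hexp, Finset.sum_range_succ', pow_zero]
        have : coeff (k + 1) (1 : PowerSeries ℚ) = 0 := by
          rw [coeff_one]; simp
        rw [this, zero_div, add_zero, Finset.sum_mul]
    _ = ∑ j ∈ Finset.range (k + 1), coeff k (d⁄dX ℚ F * F ^ j) / (j.factorial : ℚ) := by
        refine Finset.sum_congr rfl fun j hj => ?_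
        have hfac : ((j + 1).factorial : ℚ) = ((j : ℚ) + 1) * (j.factorial : ℚ) := by
          rw [Nat.factorial_succ]; push_cast; ring
        have hj1 : ((j : ℚ) + 1) ≠ 0 := by positivity
        have hjf : (j.factorial : ℚ) ≠ 0 := by
          exact_mod_cast Nat.factorial_ne_zero j
        rw [hfac]
        field_simp
        linear_combination key j k
    _ = ∑ p ∈ Finset.HasAntidiagonal.antidiagonal k, coeff p.1 (d⁄dX ℚ F) * coeff p.2 (expOf F) := by
        have lhs_eq : ∀ j, coeff k (d⁄dX ℚ F * F ^ j) / (j.factorial : ℚ)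
            = ∑ p ∈ Finset.HasAntidiagonal.antidiagonal k,
                coeff p.1 (d⁄dX ℚ F) * coeff p.2 (F ^ j) / (j.factorial : ℚ) := by
          intro j; rw [coeff_mul, Finset.sum_div]
        simp only [lhs_eq]
        rw [Finset.sum_comm]
        refine Finset.sum_congr rfl fun p hp => ?_
        have hp2 : p.2 ≤ k := by
          have := Finset.HasAntidiagonal.mem_antidiagonal.mp hp; omega
        rw [hexp, Finset.mul_sum]
        have hss := Finset.sum_subset
          (f := fun j => coeff p.1 (d⁄dX ℚ F) * (coeff p.2 (F ^ j) / (j.factorial : ℚ)))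
          (Finset.range_subset_range.mpr (by omega : p.2 + 1 ≤ k + 1))
          (fun j hj hj' => by
            rw [Finset.mem_range, Nat.not_lt] at hj'
            simp [coeff_pow_zero hF (show p.2 < j by omega)])
        rw [hss]
        exact Finset.sum_congr rfl fun j _ => by simp [mul_div_assoc]

private lemma ode_unique {H A B : PowerSeries ℚ}
    (hA : d⁄dX ℚ A = H * A) (hB : d⁄dX ℚ B = H * B)
    (h0 : constantCoeff A = constantCoeff B) : A = B := by
  ext n
  induction n using Nat.strong_induction_on with
  | _ n ih =>
    match n with
    | 0 => simpa [coeff_zero_eq_constantCoeff] using h0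
    | Nat.succ n =>
      have hA' := congrArg (coeff n) hA
      have hB' := congrArg (coeff n) hB
      rw [coeff_derivative, coeff_mul] at hA' hB'
      have hsum : ∑ p ∈ Finset.HasAntidiagonal.antidiagonal n, coeff p.1 H * coeff p.2 A
          = ∑ p ∈ Finset.HasAntidiagonal.antidiagonal n, coeff p.1 H * coeff p.2 B := by
        refine Finset.sum_congr rfl fun p hp => ?_
        have hp2 : p.2 ≤ n := by
          have := Finset.HasAntidiagonal.mem_antidiagonal.mp hp; omega
        rw [ih p.2 (by omega)]
      have hn : ((n : ℚ) + 1) ≠ 0 := by positivity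
      have := hA'.trans (hsum.trans hB'.symm)
      exact mul_right_cancel₀ hn this

end PS

section Main

open Finset Function PowerSeries

private noncomputable def Gser (m : ℕ) : PowerSeries ℚ :=
  PowerSeries.mk fun k => if m ∣ (k + 1) then -(m : ℚ) else 0

private lemma Gkey {a : ℕ} (ha : 1 ≤ a) :
    Gser a * (1 - (X : PowerSeries ℚ) ^ a) = d⁄dX ℚ (1 - (X : PowerSeries ℚ) ^ a) := by
  ext k
  rw [mul_sub, mul_one, coeff_derivative, map_sub, map_sub, PowerSeries.coeff_mul_X_pow']
  simp only [Gser, coeff_mk, coeff_one, PowerSeries.coeff_X_pow, Nat.succ_ne_zero, if_false]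
  rcases lt_trichotomy (k + 1) a with h | h | h
  · rw [if_neg (fun hd => by have := Nat.le_of_dvd (Nat.succ_pos k) hd; omega),
      if_neg (by omega), if_neg (by omega)]
    ring
  · rw [if_pos (h ▸ dvd_refl a), if_neg (by omega), if_pos h, ← h]
    push_cast
    ring
  · have hak : a ≤ k := by omega
    have heq : k - a + 1 = k + 1 - a := by omega
    rw [if_pos hak, heq, if_neg (show ¬ (k + 1 = a) by omega)]
    by_cases hd : a ∣ k + 1
    · rw [if_pos hd, if_pos (Nat.dvd_sub hd dvd_rfl)]
      ring
    · rw [if_neg hd, if_neg (fun hd' => hd (by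
        have := Nat.sub_add_cancel (show a ≤ k + 1 by omega)
        exact this ▸ Nat.dvd_add hd' dvd_rfl))]
      ring

private lemma dfactor {a : ℕ} (ha : 1 ≤ a) (e : ℕ) :
    d⁄dX ℚ ((1 - (X : PowerSeries ℚ) ^ a) ^ e)
      = (e : PowerSeries ℚ) * Gser a * (1 - (X : PowerSeries ℚ) ^ a) ^ e := by
  rcases Nat.eq_zero_or_pos e with rfl | he
  · simp
  · have h := Derivation.leibniz_pow (d⁄dX ℚ) (a := 1 - (X : PowerSeries ℚ) ^ a) e
    rw [smul_eq_mul] at h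
    rw [h, ← Gkey ha, nsmul_eq_mul]
    obtain ⟨e', rfl⟩ : ∃ e', e = e' + 1 := ⟨e - 1, by omega⟩
    rw [Nat.add_sub_cancel]
    ring

private lemma deriv_prod (D : ℕ → ℕ) (s : Finset ℕ) (hs : ∀ m ∈ s, 1 ≤ m) :
    d⁄dX ℚ (∏ m ∈ s, (1 - (X : PowerSeries ℚ) ^ m) ^ (D m))
      = (∑ m ∈ s, (D m : PowerSeries ℚ) * Gser m)
          * ∏ m ∈ s, (1 - (X : PowerSeries ℚ) ^ m) ^ (D m) := by
  induction s using Finset.induction_on with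
  | empty => simp
  | insert a s ha ih =>
    have hs' : ∀ m ∈ s, 1 ≤ m := fun m hm => hs m (Finset.mem_insert_of_mem hm)
    rw [Finset.prod_insert ha, Finset.sum_insert ha, Derivation.leibniz,
      smul_eq_mul, smul_eq_mul, ih hs', dfactor (hs a (Finset.mem_insert_self a s)) (D a)]
    ring

open PowerSeries in
theorem zetaFunction_eq_exp
    {M : Type*} [Fintype M] [DecidableEq M] (f : M → M) :
    ∏ m ∈ Finset.Icc 1 (Fintype.card M),
        ((1 - (PowerSeries.X : PowerSeries ℚ) ^ m) ^ doldD f m) =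
      PowerSeries.expOf
        (PowerSeries.mk fun k =>
          if k = 0 then 0 else -((Nat.card {x : M // f^[k] x = x} : ℚ) / (k : ℚ))) := by
  set N := Fintype.card M with hN
  set F : PowerSeries ℚ := PowerSeries.mk fun k =>
    if k = 0 then 0 else -((Nat.card {x : M // f^[k] x = x} : ℚ) / (k : ℚ)) with hF
  set A : PowerSeries ℚ := ∏ m ∈ Finset.Icc 1 N, ((1 - (X : PowerSeries ℚ) ^ m) ^ doldD f m)
    with hA
  have hF0 : constantCoeff F = 0 := by
    rw [hF, ← coeff_zero_eq_constantCoeff_apply, coeff_mk, if_pos rfl]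
  have hdF : d⁄dX ℚ F = ∑ m ∈ Finset.Icc 1 N, (doldD f m : PowerSeries ℚ) * Gser m := by
    ext k
    rw [coeff_derivative, hF, coeff_mk, if_neg (Nat.succ_ne_zero k),
      fix_card f (k + 1) (Nat.succ_pos k), map_sum]
    have hco : ∀ m ∈ Finset.Icc 1 N,
        coeff k ((doldD f m : PowerSeries ℚ) * Gser m)
          = if m ∣ k + 1 then -((m : ℚ) * (doldD f m : ℚ)) else 0 := by
      intro m hm
      rw [← map_natCast C (doldD f m), coeff_C_mul, Gser, coeff_mk]
      split_ifs <;> ring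
    rw [Finset.sum_congr rfl hco, ← Finset.sum_filter]
    have hk1 : ((k : ℚ) + 1) ≠ 0 := by positivity
    push_cast
    field_simp
    rw [Finset.sum_neg_distrib]
  have hAode : d⁄dX ℚ A = d⁄dX ℚ F * A := by
    rw [hdF, hA]
    exact deriv_prod (doldD f) _ (fun m hm => (Finset.mem_Icc.mp hm).1)
  have hEode : d⁄dX ℚ (expOf F) = d⁄dX ℚ F * expOf F := derivative_expOf hF0
  have hAc : constantCoeff A = 1 := by
    rw [hA, map_prod]
    refine Finset.prod_eq_one fun m hm => ?_
    have hm1 : 1 ≤ m := (Finset.mem_Icc.mp hm).1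
    rw [map_pow, map_sub, map_one, map_pow, constantCoeff_X,
      zero_pow (by omega : m ≠ 0), sub_zero, one_pow]
  exact ode_unique hAode hEode (hAc.trans (constantCoeff_expOf F).symm)

end Main
end

section
/- Let K be a field, n ≥ 0, and A an n × n matrix over K, regarded as a linear endomorphism of K^n. Then in the polynomial ring K[X] one has det(1ₙ + X·A) = ∑_{k=0}^{n} tr(⋀^k A) · X^k, where det(1ₙ + X·A) is the determinant of the matrix over K[X] with (i,j) entry δ_{ij} + X·A_{ij}, and ⋀^k A denotes the endomorphism induced by A on the k-th exterior power ⋀^k(K^n), with tr its trace. -/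
open ExteriorAlgebra Polynomial

namespace ExtTraceAux

variable (K : Type*) [Field K] {n : ℕ}

/-- selection map of a finset of given card -/
abbrev sel {k : ℕ} (s : {s : Finset (Fin n) // s.card = k}) : Fin k → Fin n :=
  s.1.orderEmbOfFin s.2

noncomputable def Phi {k : ℕ} (s : {s : Finset (Fin n) // s.card = k}) :
    (Fin n → K) [⋀^Fin k]→ₗ[K] K :=
  (Matrix.detRowAlternating).compLinearMap (LinearMap.funLeft K K (sel s))

lemma Phi_apply {k : ℕ} (s : {s : Finset (Fin n) // s.card = k}) (v : Fin k → (Fin n → K)) :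
    Phi K s v = Matrix.det (Matrix.of fun i j => v i (sel s j)) := rfl

noncomputable def phi {k : ℕ} (s : {s : Finset (Fin n) // s.card = k}) :
    (⋀[K]^k (Fin n → K)) →ₗ[K] K :=
  (ExteriorAlgebra.liftAlternating (Function.update 0 k (Phi K s))).comp
    (Submodule.subtype _)

lemma phi_apply {k : ℕ} (s : {s : Finset (Fin n) // s.card = k})
    (x : ⋀[K]^k (Fin n → K)) :
    phi K s x = ExteriorAlgebra.liftAlternating (Function.update 0 k (Phi K s)) (x : ExteriorAlgebra K (Fin n → K)) := rfl

lemma phi_apply_ιMulti {k : ℕ} (s : {s : Finset (Fin n) // s.card = k})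
    (v : Fin k → (Fin n → K)) (hv) :
    phi K s (⟨ExteriorAlgebra.ιMulti K k v, hv⟩ : ⋀[K]^k (Fin n → K)) = Phi K s v := by
  rw [phi_apply]
  simp [ExteriorAlgebra.liftAlternating_apply_ιMulti]

/-- standard wedge vectors -/
noncomputable def E {k : ℕ} (s : {s : Finset (Fin n) // s.card = k}) :
    ⋀[K]^k (Fin n → K) :=
  ⟨ExteriorAlgebra.ιMulti K k fun i => Pi.single (sel s i) (1 : K),
    ExteriorAlgebra.ιMulti_range K k (Set.mem_range_self _)⟩

lemma Phi_std {k : ℕ} (s t : {s : Finset (Fin n) // s.card = k}) :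
    Phi K s (fun i => Pi.single (sel t i) (1 : K)) = if s = t then 1 else 0 := by
  rw [Phi_apply]
  split_ifs with h
  · subst h
    have : (Matrix.of fun i j => Pi.single (M := fun _ : Fin n => K) (sel s i) 1 (sel s j)) = 1 := by
      ext i j
      simp only [Matrix.of_apply, Pi.single_apply, Matrix.one_apply,
        (s.1.orderEmbOfFin s.2).injective.eq_iff]
      exact if_congr eq_comm rfl rfl
    rw [this, Matrix.det_one]
  · -- find x ∈ t \ s
    have hts : ¬ (t.1 ⊆ s.1) := by
      intro hsub
      exact h (Subtype.ext (Finset.eq_of_subset_of_card_le hsub (by rw [s.2, t.2])).symm)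
    obtain ⟨x, hxt, hxs⟩ := Finset.not_subset.mp hts
    obtain ⟨i₀, hi₀⟩ : ∃ i₀, sel t i₀ = x := by
      have : x ∈ Set.range (sel t) := by
        rw [Finset.range_orderEmbOfFin]; exact_mod_cast hxt
      exact this
    apply Matrix.det_eq_zero_of_row_eq_zero i₀
    intro j
    have : sel t i₀ ≠ sel s j := by
      rw [hi₀]; intro hxy; exact hxs (hxy ▸ Finset.orderEmbOfFin_mem s.1 s.2 j)
    simp [Pi.single_apply, this.symm]


lemma phi_E {k : ℕ} (s t : {s : Finset (Fin n) // s.card = k}) :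
    phi K s (E K t) = if s = t then 1 else 0 := by
  rw [E, phi_apply_ιMulti, Phi_std]


lemma E_linearIndependent (k : ℕ) :
    LinearIndependent K (E K (n := n) (k := k)) := by
  rw [Fintype.linearIndependent_iff]
  intro g hg s
  have := congrArg (phi K s) hg
  rw [map_sum, map_zero] at this
  simp only [map_smul, phi_E, smul_eq_mul, mul_ite, mul_one, mul_zero] at this
  rwa [Finset.sum_ite_eq (Finset.univ) s g, if_pos (Finset.mem_univ s)] at this

lemma single_span_aux {k : ℕ} (r : Fin k → Fin n) :
    (ExteriorAlgebra.ιMulti K k fun i => Pi.single (M := fun _ : Fin n => K) (r i) 1) ∈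
      Submodule.span K (Set.range fun t : {s : Finset (Fin n) // s.card = k} =>
        (ExteriorAlgebra.ιMulti K k fun i => Pi.single (M := fun _ : Fin n => K) (sel t i) 1)) := by
  by_cases hr : Function.Injective r
  · -- r is a permutation of a sorted selection
    set s : Finset (Fin n) := Finset.univ.image r with hs
    have hcard : s.card = k := by
      rw [hs, Finset.card_image_of_injective _ hr, Finset.card_univ, Fintype.card_fin]
    set t : {s : Finset (Fin n) // s.card = k} := ⟨s, hcard⟩ with ht
    have hmem : ∀ i, r i ∈ s := fun i => Finset.mem_image_of_mem r (Finset.mem_univ i)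
    set σ : Fin k → Fin k := fun i => (s.orderIsoOfFin hcard).symm ⟨r i, hmem i⟩ with hσ
    have hσinj : Function.Injective σ := by
      intro a b hab
      have h2 : (⟨r a, hmem a⟩ : {x // x ∈ s}) = ⟨r b, hmem b⟩ := by
        have := congrArg (s.orderIsoOfFin hcard) hab
        simpa [hσ] using this
      exact hr (congrArg Subtype.val h2)
    have hσbij := Finite.injective_iff_bijective.mp hσinj
    set e : Equiv.Perm (Fin k) := Equiv.ofBijective σ hσbij with he
    have hcomp : (fun i => Pi.single (M := fun _ : Fin n => K) (r i) 1)
        = (fun i => Pi.single (M := fun _ : Fin n => K) (sel t i) 1) ∘ e := by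
      funext i
      have : sel t (e i) = r i := by
        show (s.orderEmbOfFin hcard) (σ i) = r i
        rw [← Finset.coe_orderIsoOfFin_apply, hσ]
        simp
      simp [Function.comp, this]
    rw [hcomp, AlternatingMap.map_perm]
    rcases Int.units_eq_one_or (Equiv.Perm.sign e) with h | h
    · rw [h, one_smul]
      exact Submodule.subset_span (Set.mem_range_self t)
    · rw [h]
      have hm : (ExteriorAlgebra.ιMulti K k fun i => Pi.single (M := fun _ : Fin n => K) (sel t i) 1) ∈
          Submodule.span K (Set.range fun t : {s : Finset (Fin n) // s.card = k} =>
            (ExteriorAlgebra.ιMulti K k fun i => Pi.single (M := fun _ : Fin n => K) (sel t i) 1)) :=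
        Submodule.subset_span (Set.mem_range_self t)
      simpa using Submodule.neg_mem _ hm
  · -- not injective: the wedge vanishes
    rw [Function.not_injective_iff] at hr
    obtain ⟨a, b, hab, hne⟩ := hr
    rw [AlternatingMap.map_eq_zero_of_eq _ _ (by rw [hab]) hne]
    exact Submodule.zero_mem _

lemma E_span (k : ℕ) :
    ⊤ ≤ Submodule.span K (Set.range (E K (n := n) (k := k))) := by
  have key : Submodule.span K (Set.range fun t : {s : Finset (Fin n) // s.card = k} =>
      (ExteriorAlgebra.ιMulti K k fun i => Pi.single (sel t i) (1 : K)))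
      = ⋀[K]^k (Fin n → K) := by
    apply le_antisymm
    · rw [Submodule.span_le]
      rintro x ⟨t, rfl⟩
      exact ExteriorAlgebra.ιMulti_range K k (Set.mem_range_self _)
    · rw [← ExteriorAlgebra.ιMulti_span_fixedDegree, Submodule.span_le]
      rintro x ⟨v, rfl⟩
      have hv : v = fun i => ∑ j, v i j • Pi.single (M := fun _ : Fin n => K) j 1 := by
        funext i
        rw [← Finset.univ_sum_single (v i)]
        congr 1
        funext j
        ext j'
        simp [Pi.single_apply, mul_comm]
      rw [hv]
      have e1 : (ExteriorAlgebra.ιMulti K k)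
            (fun i => ∑ j, v i j • Pi.single (M := fun _ : Fin n => K) j 1)
          = ∑ r : Fin k → Fin n, (ExteriorAlgebra.ιMulti K k)
              (fun i => v i (r i) • Pi.single (M := fun _ : Fin n => K) (r i) 1) :=
        (ExteriorAlgebra.ιMulti K k).toMultilinearMap.map_sum
          (g := fun i j => v i j • Pi.single (M := fun _ : Fin n => K) j 1)
      rw [e1]
      refine Submodule.sum_mem _ fun r _ => ?_
      have e2 : (ExteriorAlgebra.ιMulti K k)
            (fun i => v i (r i) • Pi.single (M := fun _ : Fin n => K) (r i) 1)
          = (∏ i, v i (r i)) • (ExteriorAlgebra.ιMulti K k)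
              (fun i => Pi.single (M := fun _ : Fin n => K) (r i) 1) :=
        (ExteriorAlgebra.ιMulti K k).toMultilinearMap.map_smul_univ
          (fun i => v i (r i)) (fun i => Pi.single (r i) 1)
      rw [e2]
      exact Submodule.smul_mem _ _ (single_span_aux K r)
  have : Submodule.map (⋀[K]^k (Fin n → K)).subtype
      (Submodule.span K (Set.range (E K (n := n) (k := k))))
      = Submodule.map (⋀[K]^k (Fin n → K)).subtype ⊤ := by
    rw [Submodule.map_span, Submodule.map_top, Submodule.range_subtype,
      ← Set.range_comp]
    exact key
  have hinj := Submodule.map_injective_of_injective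
    (Submodule.injective_subtype (⋀[K]^k (Fin n → K))) this
  rw [hinj]


noncomputable def bas (k : ℕ) : Module.Basis {s : Finset (Fin n) // s.card = k} K
    (⋀[K]^k (Fin n → K)) :=
  Module.Basis.mk (E_linearIndependent K k) (E_span K k)

lemma bas_repr {k : ℕ} (x : ⋀[K]^k (Fin n → K)) (s : {s : Finset (Fin n) // s.card = k}) :
    (bas K k).repr x s = phi K s x := by
  have : (bas K k).coord s = phi K s := by
    apply Module.Basis.ext (bas K k)
    intro t
    rw [Module.Basis.coord_apply, Module.Basis.repr_self, Finsupp.single_apply, bas, Module.Basis.mk_apply, phi_E]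
    exact if_congr eq_comm rfl rfl
  rw [← this, Module.Basis.coord_apply]

lemma trace_eq_sum_minor (A : Matrix (Fin n) (Fin n) K) (k : ℕ)
    (Bk : (⋀[K]^k (Fin n → K)) →ₗ[K] (⋀[K]^k (Fin n → K)))
    (hBk : ∀ (v : Fin k → (Fin n → K)),
      ((Bk ⟨ExteriorAlgebra.ιMulti K k v,
          ExteriorAlgebra.ιMulti_range K k (Set.mem_range_self v)⟩ :
        ⋀[K]^k (Fin n → K)) : ExteriorAlgebra K (Fin n → K)) =
        ExteriorAlgebra.ιMulti K k (fun i => Matrix.toLin' A (v i))) :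
    LinearMap.trace K _ Bk
      = ∑ t : {s : Finset (Fin n) // s.card = k},
          Matrix.det (A.submatrix (sel t) (sel t)) := by
  classical
  rw [LinearMap.trace_eq_matrix_trace K (bas K k) Bk, Matrix.trace]
  refine Finset.sum_congr rfl fun t _ => ?_
  rw [Matrix.diag]
  rw [LinearMap.toMatrix_apply, bas_repr]
  have hbt : bas K k t = E K t := Module.Basis.mk_apply _ _ _
  rw [hbt]
  have hE : (E K t : ⋀[K]^k (Fin n → K))
      = ⟨ExteriorAlgebra.ιMulti K k (fun i => Pi.single (M := fun _ : Fin n => K) (sel t i) 1),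
          ExteriorAlgebra.ιMulti_range K k (Set.mem_range_self _)⟩ := rfl
  rw [hE]
  rw [phi_apply, hBk, ExteriorAlgebra.liftAlternating_apply_ιMulti, Function.update_self]
  rw [Phi_apply]
  have hmat : (Matrix.of fun i j => Matrix.toLin' A
        (Pi.single (M := fun _ : Fin n => K) (sel t i) 1) (sel t j))
      = Matrix.transpose (A.submatrix (sel t) (sel t)) := by
    ext i j
    rw [Matrix.transpose_apply, Matrix.of_apply, Matrix.toLin'_apply, Matrix.mulVec_single]
    show A (sel t j) (sel t i) * 1 = _
    rw [mul_one]
    rfl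
  rw [hmat, Matrix.det_transpose]


lemma det_piecewise {R : Type*} [CommRing R] (Bm : Matrix (Fin n) (Fin n) R)
    (s : Finset (Fin n)) :
    Matrix.det (Matrix.of (s.piecewise Bm (1 : Matrix (Fin n) (Fin n) R)))
      = Matrix.det (Bm.submatrix (fun i : {x : Fin n // x ∈ s} => (i : Fin n))
          (fun i : {x : Fin n // x ∈ s} => (i : Fin n))) := by
  classical
  let e : {x : Fin n // x ∈ s} ⊕ {x : Fin n // ¬ x ∈ s} ≃ Fin n := Equiv.sumCompl (· ∈ s)
  rw [← Matrix.det_submatrix_equiv_self e]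
  have hblock : (Matrix.of (s.piecewise Bm (1 : Matrix (Fin n) (Fin n) R))).submatrix e e
      = Matrix.fromBlocks
          (Bm.submatrix (fun i : {x : Fin n // x ∈ s} => (i : Fin n))
            (fun i : {x : Fin n // x ∈ s} => (i : Fin n)))
          (Bm.submatrix (fun i : {x : Fin n // x ∈ s} => (i : Fin n))
            (fun i : {x : Fin n // ¬ x ∈ s} => (i : Fin n)))
          0 1 := by
    ext i j
    rcases i with a | a <;> rcases j with b | b <;>
      simp only [e, Matrix.submatrix_apply, Matrix.of_apply, Matrix.fromBlocks_apply₁₁,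
        Matrix.fromBlocks_apply₁₂, Matrix.fromBlocks_apply₂₁, Matrix.fromBlocks_apply₂₂,
        Equiv.sumCompl_apply_inl, Equiv.sumCompl_apply_inr]
    · simp only [Finset.piecewise, a.2, ↓reduceIte]
    · simp only [Finset.piecewise, a.2, ↓reduceIte]
    · simp only [Finset.piecewise, a.2, ↓reduceIte]
      have hne : (a : Fin n) ≠ (b : Fin n) := fun h => a.2 (h ▸ b.2)
      simp [Matrix.one_apply_ne hne]
    · simp only [Finset.piecewise, a.2, ↓reduceIte]
      simp only [Matrix.one_apply]
      by_cases hab : a = b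
      · subst hab; simp
      · have hne : (a : Fin n) ≠ (b : Fin n) := fun h => hab (Subtype.ext h)
        simp [hne, hab]
  rw [hblock, Matrix.det_fromBlocks_zero₂₁, Matrix.det_one, mul_one]

lemma det_one_add_X_smul' (A : Matrix (Fin n) (Fin n) K) :
    Matrix.det ((1 : Matrix (Fin n) (Fin n) (Polynomial K)) + (X : Polynomial K) • A.map C)
      = ∑ s : Finset (Fin n),
          C (Matrix.det (A.submatrix (fun i : {x : Fin n // x ∈ s} => (i : Fin n))
            (fun i : {x : Fin n // x ∈ s} => (i : Fin n)))) * X ^ s.card := by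
  classical
  set m : Fin n → Fin n → Polynomial K := fun i => ((X : Polynomial K) • A.map C) i with hm
  set m' : Fin n → Fin n → Polynomial K := fun i => (1 : Matrix (Fin n) (Fin n) (Polynomial K)) i
    with hm'
  have h0 : ((1 : Matrix (Fin n) (Fin n) (Polynomial K)) + (X : Polynomial K) • A.map C)
      = Matrix.of (m + m') := by
    ext i j
    simp [hm, hm', add_comm]
  rw [h0]
  have hdet : Matrix.det (Matrix.of (m + m'))
      = Matrix.detRowAlternating (R := Polynomial K) (n := Fin n) (m + m') := rfl
  have hadd : Matrix.detRowAlternating (R := Polynomial K) (n := Fin n) (m + m')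
      = ∑ s : Finset (Fin n),
          Matrix.detRowAlternating (R := Polynomial K) (n := Fin n) (s.piecewise m m') :=
    (Matrix.detRowAlternating (R := Polynomial K)
      (n := Fin n)).toMultilinearMap.map_add_univ m m'
  rw [hdet, hadd]
  refine Finset.sum_congr rfl fun s _ => ?_
  set mm : Fin n → Fin n → Polynomial K := s.piecewise ((A.map C : Matrix _ _ (Polynomial K))) m'
    with hmm
  have hpw : s.piecewise m m' = s.piecewise (fun i => (X : Polynomial K) • mm i) mm := by
    funext i
    by_cases hi : i ∈ s
    · rw [Finset.piecewise_eq_of_mem _ _ _ hi, Finset.piecewise_eq_of_mem _ _ _ hi, hmm]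
      simp only [Finset.piecewise, hi, ↓reduceIte]
      rfl
    · rw [Finset.piecewise_eq_of_notMem _ _ _ hi, Finset.piecewise_eq_of_notMem _ _ _ hi, hmm]
      simp only [Finset.piecewise, hi, ↓reduceIte]
  rw [hpw]
  have hsmul : Matrix.detRowAlternating (R := Polynomial K) (n := Fin n)
        (s.piecewise (fun i => (X : Polynomial K) • mm i) mm)
      = (∏ _i ∈ s, (X : Polynomial K)) •
          Matrix.detRowAlternating (R := Polynomial K) (n := Fin n) mm :=
    (Matrix.detRowAlternating (R := Polynomial K)
      (n := Fin n)).toMultilinearMap.map_piecewise_smul (fun _ => (X : Polynomial K)) mm s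
  rw [hsmul, Finset.prod_const]
  have : Matrix.detRowAlternating (R := Polynomial K) (n := Fin n) mm
      = Matrix.det (Matrix.of (s.piecewise (A.map C) (1 : Matrix (Fin n) (Fin n) (Polynomial K)))) := rfl
  rw [this, det_piecewise]
  have hsub : ((A.map C).submatrix (fun i : {x : Fin n // x ∈ s} => (i : Fin n))
        (fun i : {x : Fin n // x ∈ s} => (i : Fin n)))
      = ((A.submatrix (fun i : {x : Fin n // x ∈ s} => (i : Fin n))
        (fun i : {x : Fin n // x ∈ s} => (i : Fin n))).map C) := rfl
  rw [hsub, smul_eq_mul, mul_comm]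
  congr 1
  rw [RingHom.map_det, RingHom.mapMatrix_apply]


lemma minor_subtype_eq {k : ℕ} (A : Matrix (Fin n) (Fin n) K)
    (t : {s : Finset (Fin n) // s.card = k}) :
    Matrix.det (A.submatrix (fun i : {x : Fin n // x ∈ t.1} => (i : Fin n))
        (fun i : {x : Fin n // x ∈ t.1} => (i : Fin n)))
      = Matrix.det (A.submatrix (sel t) (sel t)) := by
  rw [← Matrix.det_submatrix_equiv_self (t.1.orderIsoOfFin t.2).toEquiv
    (A.submatrix (fun i : {x : Fin n // x ∈ t.1} => (i : Fin n))
      (fun i : {x : Fin n // x ∈ t.1} => (i : Fin n)))]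
  congr 1

end ExtTraceAux

/-- For a field `K` and an `n × n` matrix `A` over `K`, regarded as an endomorphism of
`K^n`, suppose that for each `k` the endomorphism `B k` of the `k`-th exterior power
`⋀[K]^k (K^n)` is the one induced by `A` (i.e. it sends `v₁ ∧ ⋯ ∧ v_k` to
`A v₁ ∧ ⋯ ∧ A v_k`; this determines `B k` uniquely since such products span `⋀^k`).
Then `det(1ₙ + X·A) = ∑_{k=0}^{n} tr(⋀^k A) · X^k` in `K[X]`. -/
theorem det_one_add_X_smul_eq_sum_trace_exteriorPower
    {K : Type*} [Field K] (n : ℕ) (A : Matrix (Fin n) (Fin n) K)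
    (B : (k : ℕ) → (⋀[K]^k (Fin n → K)) →ₗ[K] (⋀[K]^k (Fin n → K)))
    (hB : ∀ (k : ℕ) (v : Fin k → (Fin n → K)),
      ((B k ⟨ExteriorAlgebra.ιMulti K k v,
          ExteriorAlgebra.ιMulti_range K k (Set.mem_range_self v)⟩ :
        ⋀[K]^k (Fin n → K)) : ExteriorAlgebra K (Fin n → K)) =
        ExteriorAlgebra.ιMulti K k (fun i => Matrix.toLin' A (v i))) :
    Matrix.det ((1 : Matrix (Fin n) (Fin n) (Polynomial K)) +
        (Polynomial.X : Polynomial K) • A.map Polynomial.C) =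
      ∑ k ∈ Finset.range (n + 1),
        Polynomial.C (LinearMap.trace K (⋀[K]^k (Fin n → K)) (B k)) * Polynomial.X ^ k := by
  classical
  rw [ExtTraceAux.det_one_add_X_smul' K A]
  have hmap : ∀ s ∈ (Finset.univ : Finset (Finset (Fin n))), s.card ∈ Finset.range (n + 1) := by
    intro s _
    rw [Finset.mem_range, Nat.lt_succ_iff]
    simpa using Finset.card_le_univ s
  rw [← Finset.sum_fiberwise_of_maps_to hmap
    (fun s => Polynomial.C (Matrix.det (A.submatrix (fun i : {x : Fin n // x ∈ s} => (i : Fin n))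
      (fun i : {x : Fin n // x ∈ s} => (i : Fin n)))) * Polynomial.X ^ s.card)]
  refine Finset.sum_congr rfl fun k _ => ?_
  rw [ExtTraceAux.trace_eq_sum_minor K A k (B k) (hB k), map_sum, Finset.sum_mul]
  have hmem : ∀ x : Finset (Fin n),
      x ∈ Finset.univ.filter (fun s : Finset (Fin n) => s.card = k) ↔ x.card = k := by
    intro x; simp
  have hrw : ∀ t : {s : Finset (Fin n) // s.card = k},
      Polynomial.C (Matrix.det (A.submatrix (ExtTraceAux.sel t) (ExtTraceAux.sel t)))
          * Polynomial.X ^ k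
        = (fun s : Finset (Fin n) =>
            Polynomial.C (Matrix.det (A.submatrix (fun i : {x : Fin n // x ∈ s} => (i : Fin n))
              (fun i : {x : Fin n // x ∈ s} => (i : Fin n)))) * Polynomial.X ^ k) t.1 := by
    intro t
    rw [← ExtTraceAux.minor_subtype_eq K A t]
  rw [Finset.sum_congr rfl (fun t _ => hrw t), ← Finset.sum_subtype _ hmem
    (fun s => Polynomial.C (Matrix.det (A.submatrix (fun i : {x : Fin n // x ∈ s} => (i : Fin n))
      (fun i : {x : Fin n // x ∈ s} => (i : Fin n)))) * Polynomial.X ^ k)]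
  refine Finset.sum_congr rfl fun s hs => ?_
  rw [(Finset.mem_filter.mp hs).2]
end

section
/- Let M be a finite set and f : M → M a function. For k ≥ 0 let N_k be the number of multisets s of cardinality k with elements in M such that the image multiset of s under f equals s (i.e. Multiset.map f s = s). Then in ℤ[[q]]: ( ∑_{k ≥ 0} N_k q^k ) · ∏_{m=1}^{#M} (1 − q^m)^{D_m(f)} = 1. -/
open Finset Function PowerSeries

section PS

lemma finite_sol {ι : Type*} [Fintype ι] (w : ι → ℕ) (hw : ∀ i, 0 < w i) (t : Finset ι) (k : ℕ) :
    Finite {c : ι → ℕ // (∀ i ∉ t, c i = 0) ∧ ∑ i ∈ t, c i * w i = k} := by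
  apply Finite.of_injective (fun c => (fun i => (⟨min (c.1 i) k, by omega⟩ : Fin (k+1))))
  intro c d h
  ext i
  have hc : c.1 i ≤ k := by
    by_cases hi : i ∈ t
    · have h1 : c.1 i * w i ≤ ∑ j ∈ t, c.1 j * w j :=
        Finset.single_le_sum (f := fun j => c.1 j * w j) (fun j _ => Nat.zero_le _) hi
      have h2 : c.1 i ≤ c.1 i * w i := Nat.le_mul_of_pos_right _ (hw i)
      omega
    · simp [c.2.1 i hi]
  have hd : d.1 i ≤ k := by
    by_cases hi : i ∈ t
    · have h1 : d.1 i * w i ≤ ∑ j ∈ t, d.1 j * w j :=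
        Finset.single_le_sum (f := fun j => d.1 j * w j) (fun j _ => Nat.zero_le _) hi
      have h2 : d.1 i ≤ d.1 i * w i := Nat.le_mul_of_pos_right _ (hw i)
      omega
    · simp [d.2.1 i hi]
  have := congrFun h i
  simp only [Fin.mk.injEq] at this
  simp only [min_eq_left hc, min_eq_left hd] at this
  exact this

private def stepEquiv {ι : Type*} [DecidableEq ι] (w : ι → ℕ) (a : ι) (t : Finset ι) (ha : a ∉ t) (n : ℕ)
    (hwa : w a ≤ n) :
    {x : {c : ι → ℕ // (∀ i ∉ insert a t, c i = 0) ∧ ∑ i ∈ insert a t, c i * w i = n} //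
      ¬ x.1 a = 0} ≃
    {c : ι → ℕ // (∀ i ∉ insert a t, c i = 0) ∧ ∑ i ∈ insert a t, c i * w i = n - w a} where
  toFun x := ⟨Function.update x.1.1 a (x.1.1 a - 1), by
    constructor
    · intro i hi
      have hia : i ≠ a := fun h => hi (by rw [h]; exact Finset.mem_insert_self a t)
      rw [Function.update_of_ne hia]
      exact x.1.2.1 i hi
    · rw [Finset.sum_insert ha, Function.update_self]
      have hsum : ∑ i ∈ t, Function.update x.1.1 a (x.1.1 a - 1) i * w i =
          ∑ i ∈ t, x.1.1 i * w i := by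
        refine Finset.sum_congr rfl fun i hi => ?_
        rw [Function.update_of_ne (fun h => ha (by rw [← h]; exact hi))]
      rw [hsum]
      have hx := x.1.2.2
      rw [Finset.sum_insert ha] at hx
      have hx1 : 1 ≤ x.1.1 a := Nat.one_le_iff_ne_zero.mpr x.2
      have hP : w a ≤ x.1.1 a * w a := Nat.le_mul_of_pos_left (w a) hx1
      have hsub : (x.1.1 a - 1) * w a = x.1.1 a * w a - w a := by
        rw [Nat.sub_one_mul]
      omega⟩
  invFun c := ⟨⟨Function.update c.1 a (c.1 a + 1), by
    constructor
    · intro i hi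
      have hia : i ≠ a := fun h => hi (by rw [h]; exact Finset.mem_insert_self a t)
      rw [Function.update_of_ne hia]
      exact c.2.1 i hi
    · rw [Finset.sum_insert ha, Function.update_self]
      have hsum : ∑ i ∈ t, Function.update c.1 a (c.1 a + 1) i * w i =
          ∑ i ∈ t, c.1 i * w i := by
        refine Finset.sum_congr rfl fun i hi => ?_
        rw [Function.update_of_ne (fun h => ha (by rw [← h]; exact hi))]
      rw [hsum]
      have hc := c.2.2
      rw [Finset.sum_insert ha] at hc
      have : (c.1 a + 1) * w a = c.1 a * w a + w a := by ring
      omega⟩, by simp⟩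
  left_inv x := by
    refine Subtype.ext (Subtype.ext (funext fun i => ?_))
    show Function.update (Function.update x.1.1 a (x.1.1 a - 1)) a
        (Function.update x.1.1 a (x.1.1 a - 1) a + 1) i = x.1.1 i
    have hx1 : 1 ≤ x.1.1 a := Nat.one_le_iff_ne_zero.mpr x.2
    by_cases h : i = a
    · subst h
      simp only [Function.update_self]
      omega
    · rw [Function.update_of_ne h, Function.update_of_ne h]
  right_inv c := by
    refine Subtype.ext (funext fun i => ?_)
    show Function.update (Function.update c.1 a (c.1 a + 1)) a
        (Function.update c.1 a (c.1 a + 1) a - 1) i = c.1 i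
    by_cases h : i = a
    · subst h
      simp only [Function.update_self]
      omega
    · rw [Function.update_of_ne h, Function.update_of_ne h]

private def zeroEquiv {ι : Type*} [DecidableEq ι] (w : ι → ℕ) (a : ι) (t : Finset ι)
    (ha : a ∉ t) (n : ℕ) :
    {x : {c : ι → ℕ // (∀ i ∉ insert a t, c i = 0) ∧ ∑ i ∈ insert a t, c i * w i = n} //
      x.1 a = 0} ≃
    {c : ι → ℕ // (∀ i ∉ t, c i = 0) ∧ ∑ i ∈ t, c i * w i = n} where
  toFun x := ⟨x.1.1, by
    constructor
    · intro i hi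
      by_cases h : i = a
      · exact h ▸ x.2
      · exact x.1.2.1 i (by simp [hi, h])
    · have hx := x.1.2.2
      rw [Finset.sum_insert ha, x.2, zero_mul, zero_add] at hx
      exact hx⟩
  invFun c := ⟨⟨c.1, by
    constructor
    · intro i hi
      simp only [Finset.mem_insert, not_or] at hi
      exact c.2.1 i hi.2
    · rw [Finset.sum_insert ha, c.2.1 a ha, zero_mul, zero_add]
      exact c.2.2⟩, c.2.1 a ha⟩
  left_inv x := Subtype.ext (Subtype.ext rfl)
  right_inv c := Subtype.ext rfl

private lemma isEmpty_pos {ι : Type*} [DecidableEq ι] (w : ι → ℕ) (hw : ∀ i, 0 < w i)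
    (a : ι) (t : Finset ι) (ha : a ∉ t) (n : ℕ) (hwa : ¬ w a ≤ n) :
    IsEmpty {x : {c : ι → ℕ // (∀ i ∉ insert a t, c i = 0) ∧
      ∑ i ∈ insert a t, c i * w i = n} // ¬ x.1 a = 0} := by
  refine ⟨fun x => ?_⟩
  have hx := x.1.2.2
  rw [Finset.sum_insert ha] at hx
  have hx1 : 1 ≤ x.1.1 a := Nat.one_le_iff_ne_zero.mpr x.2
  have hP : w a ≤ x.1.1 a * w a := Nat.le_mul_of_pos_left (w a) hx1
  omega

theorem genfun_aux {ι : Type*} [Fintype ι] (w : ι → ℕ) (hw : ∀ i, 0 < w i) (t : Finset ι) :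
    (PowerSeries.mk fun k =>
      (Nat.card {c : ι → ℕ // (∀ i ∉ t, c i = 0) ∧ ∑ i ∈ t, c i * w i = k} : ℤ)) *
      ∏ i ∈ t, (1 - (PowerSeries.X : PowerSeries ℤ) ^ w i) = 1 := by
  classical
  induction t using Finset.induction_on with
  | empty =>
      rw [Finset.prod_empty, mul_one]
      ext n
      rw [PowerSeries.coeff_mk, PowerSeries.coeff_one]
      split
      · next h =>
        subst h
        have h1 : Nat.card {c : ι → ℕ // (∀ i ∉ (∅ : Finset ι), c i = 0) ∧
            ∑ i ∈ (∅ : Finset ι), c i * w i = 0} = 1 := by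
          haveI : Unique {c : ι → ℕ // (∀ i ∉ (∅ : Finset ι), c i = 0) ∧
              ∑ i ∈ (∅ : Finset ι), c i * w i = 0} :=
            ⟨⟨⟨fun _ => 0, by simp⟩⟩, by rintro ⟨c, hc, -⟩; ext i; exact hc i (by simp)⟩
          exact Nat.card_unique
        rw [h1]; norm_num
      · next h =>
        have h1 : Nat.card {c : ι → ℕ // (∀ i ∉ (∅ : Finset ι), c i = 0) ∧
            ∑ i ∈ (∅ : Finset ι), c i * w i = n} = 0 := by
          haveI : IsEmpty {c : ι → ℕ // (∀ i ∉ (∅ : Finset ι), c i = 0) ∧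
              ∑ i ∈ (∅ : Finset ι), c i * w i = n} :=
            ⟨by rintro ⟨c, -, hc⟩; simp at hc; omega⟩
          exact Nat.card_of_isEmpty
        rw [h1]; norm_num
  | @insert a t ha ih =>
      haveI : Finite {c : ι → ℕ // (∀ i ∉ insert a t, c i = 0) ∧
          ∑ i ∈ insert a t, c i * w i = 0} := finite_sol w hw _ _
      have key : (PowerSeries.mk fun k =>
          (Nat.card {c : ι → ℕ // (∀ i ∉ insert a t, c i = 0) ∧
            ∑ i ∈ insert a t, c i * w i = k} : ℤ)) *
          (1 - (PowerSeries.X : PowerSeries ℤ) ^ w a) =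
          PowerSeries.mk fun k =>
          (Nat.card {c : ι → ℕ // (∀ i ∉ t, c i = 0) ∧ ∑ i ∈ t, c i * w i = k} : ℤ) := by
        ext n
        rw [mul_sub, mul_one, map_sub, PowerSeries.coeff_mul_X_pow']
        simp only [PowerSeries.coeff_mk]
        have hrec : Nat.card {c : ι → ℕ // (∀ i ∉ insert a t, c i = 0) ∧
            ∑ i ∈ insert a t, c i * w i = n} =
            Nat.card {c : ι → ℕ // (∀ i ∉ t, c i = 0) ∧ ∑ i ∈ t, c i * w i = n} +
            (if w a ≤ n then Nat.card {c : ι → ℕ // (∀ i ∉ insert a t, c i = 0) ∧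
              ∑ i ∈ insert a t, c i * w i = n - w a} else 0) := by
          haveI := finite_sol w hw (insert a t) n
          haveI := finite_sol w hw t n
          haveI := finite_sol w hw (insert a t) (n - w a)
          let A := {c : ι → ℕ // (∀ i ∉ insert a t, c i = 0) ∧
            ∑ i ∈ insert a t, c i * w i = n}
          have h1 : Nat.card A =
              Nat.card {x : A // x.1 a = 0} + Nat.card {x : A // ¬ x.1 a = 0} := by
            rw [← Nat.card_sum]
            exact Nat.card_congr (Equiv.sumCompl fun x : A => x.1 a = 0).symm
          have h2 : Nat.card {x : A // x.1 a = 0} =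
              Nat.card {c : ι → ℕ // (∀ i ∉ t, c i = 0) ∧ ∑ i ∈ t, c i * w i = n} :=
            Nat.card_congr (zeroEquiv w a t ha n)
          rw [h1, h2]
          congr 1
          split
          · next hwa => exact Nat.card_congr (stepEquiv w a t ha n hwa)
          · next hwa =>
            haveI := isEmpty_pos w hw a t ha n hwa
            exact Nat.card_of_isEmpty
        rw [hrec]
        push_cast
        split <;> ring
      rw [Finset.prod_insert ha, ← mul_assoc, key, ih]

end PS

section Orbits

variable {M : Type*} [Fintype M] [DecidableEq M] (f : M → M)

abbrev Cyc (f : M → M) := {s : Finset M // 0 < s.card ∧ IsPeriodicOrbit f s.card s}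

noncomputable instance : Fintype (Cyc f) := Fintype.ofFinite _

lemma orbit_eq {m : ℕ} (hm : 0 < m) {s : Finset M} (h : IsPeriodicOrbit f m s) {x : M}
    (hx : x ∈ s) :
    Function.minimalPeriod f x = m ∧ s = (Finset.range m).image (fun i => f^[i] x) := by
  obtain ⟨y, rfl, hcard, hy⟩ := h
  have hy' : Function.IsPeriodicPt f m y := hy
  have hmem : y ∈ Function.periodicPts f := ⟨m, hm, hy'⟩
  have hinj : Set.InjOn (fun i => f^[i] y) (Finset.range m) :=
    Finset.injOn_of_card_image_eq (by rw [hcard, Finset.card_range])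
  have hmy : Function.minimalPeriod f y = m := by
    rcases lt_or_eq_of_le (hy'.minimalPeriod_le hm) with hlt | heq
    · exfalso
      have h0 : Function.minimalPeriod f y = 0 := by
        refine hinj ?_ ?_ ?_
        · simpa using hlt
        · simpa using hm
        · simpa using Function.iterate_minimalPeriod (f := f) (x := y)
      exact absurd h0 (Nat.pos_iff_ne_zero.mp
        (Function.minimalPeriod_pos_of_mem_periodicPts hmem))
    · exact heq
  obtain ⟨i, hi, rfl⟩ := Finset.mem_image.mp hx
  have hmx : Function.minimalPeriod f (f^[i] y) = m := by
    rw [Function.minimalPeriod_apply_iterate hmem i, hmy]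
  refine ⟨hmx, ?_⟩
  have hmemx : f^[i] y ∈ Function.periodicPts f :=
    Function.minimalPeriod_pos_iff_mem_periodicPts.mp (hmx ▸ hm)
  have hsub : (Finset.range m).image (fun j => f^[j] (f^[i] y)) ⊆
      (Finset.range m).image (fun j => f^[j] y) := by
    intro b hb
    obtain ⟨j, hj, rfl⟩ := Finset.mem_image.mp hb
    refine Finset.mem_image.mpr ⟨(j + i) % m, Finset.mem_range.mpr (Nat.mod_lt _ hm), ?_⟩
    have h1 : f^[(j + i) % Function.minimalPeriod f y] y = f^[j + i] y :=
      Function.iterate_mod_minimalPeriod_eq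
    rw [hmy] at h1
    rw [h1, Function.iterate_add_apply]
  have hcard2 : ((Finset.range m).image (fun j => f^[j] (f^[i] y))).card = m := by
    rw [Finset.card_image_of_injOn, Finset.card_range]
    rw [Finset.coe_range]
    exact hmx ▸ Function.iterate_injOn_Iio_minimalPeriod
  exact (Finset.eq_of_subset_of_card_le hsub (by rw [hcard, hcard2])).symm

lemma mkCyc_aux {x : M} (hx : x ∈ Function.periodicPts f) :
    0 < ((Finset.range (Function.minimalPeriod f x)).image (fun i => f^[i] x)).card ∧
    IsPeriodicOrbit f
      ((Finset.range (Function.minimalPeriod f x)).image (fun i => f^[i] x)).card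
      ((Finset.range (Function.minimalPeriod f x)).image (fun i => f^[i] x)) := by
  have hm : 0 < Function.minimalPeriod f x :=
    Function.minimalPeriod_pos_of_mem_periodicPts hx
  have hcard : ((Finset.range (Function.minimalPeriod f x)).image (fun i => f^[i] x)).card =
      Function.minimalPeriod f x := by
    rw [Finset.card_image_of_injOn, Finset.card_range]
    rw [Finset.coe_range]
    exact Function.iterate_injOn_Iio_minimalPeriod
  refine ⟨by rw [hcard]; exact hm, ?_⟩
  rw [hcard]
  exact ⟨x, rfl, hcard, Function.iterate_minimalPeriod⟩

noncomputable def mkCyc {x : M} (hx : x ∈ Function.periodicPts f) : Cyc f :=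
  ⟨(Finset.range (Function.minimalPeriod f x)).image (fun i => f^[i] x), mkCyc_aux f hx⟩

lemma mem_mkCyc {x : M} (hx : x ∈ Function.periodicPts f) : x ∈ (mkCyc f hx).1 := by
  refine Finset.mem_image.mpr ⟨0, Finset.mem_range.mpr
    (Function.minimalPeriod_pos_of_mem_periodicPts hx), rfl⟩

lemma cyc_disjoint (O₁ O₂ : Cyc f) {x : M} (h1 : x ∈ O₁.1) (h2 : x ∈ O₂.1) : O₁ = O₂ := by
  obtain ⟨e1, hs1⟩ := orbit_eq f O₁.2.1 O₁.2.2 h1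
  obtain ⟨e2, hs2⟩ := orbit_eq f O₂.2.1 O₂.2.2 h2
  refine Subtype.ext ?_
  rw [hs1, hs2, ← e1, ← e2]

lemma image_cyc (O : Cyc f) : Finset.image f O.1 = O.1 := by
  obtain ⟨x, hx⟩ := Finset.card_pos.mp O.2.1
  obtain ⟨e, hs⟩ := orbit_eq f O.2.1 O.2.2 hx
  set m := O.1.card with hmdef
  have hm : 0 < m := O.2.1
  have hxper : x ∈ Function.periodicPts f :=
    Function.minimalPeriod_pos_iff_mem_periodicPts.mp (e ▸ hm)
  have hmod : ∀ n : ℕ, f^[n % m] x = f^[n] x := by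
    intro n
    have h1 : f^[n % Function.minimalPeriod f x] x = f^[n] x :=
      Function.iterate_mod_minimalPeriod_eq
    rwa [e] at h1
  apply Finset.Subset.antisymm
  · intro b hb
    obtain ⟨a, ha, rfl⟩ := Finset.mem_image.mp hb
    rw [hs] at ha ⊢
    obtain ⟨i, hi, rfl⟩ := Finset.mem_image.mp ha
    refine Finset.mem_image.mpr ⟨(i + 1) % m, Finset.mem_range.mpr (Nat.mod_lt _ hm), ?_⟩
    rw [hmod, Function.iterate_succ_apply']
  · intro b hb
    rw [hs] at hb
    obtain ⟨i, hi, rfl⟩ := Finset.mem_image.mp hb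
    rw [Finset.mem_range] at hi
    rcases Nat.eq_zero_or_pos i with rfl | hipos
    · refine Finset.mem_image.mpr ⟨f^[m - 1] x, ?_, ?_⟩
      · rw [hs]
        exact Finset.mem_image.mpr ⟨m - 1, Finset.mem_range.mpr (by omega), rfl⟩
      · have h1 : f (f^[m - 1] x) = f^[(m - 1) + 1] x :=
          (Function.iterate_succ_apply' f (m - 1) x).symm
        rw [h1, show m - 1 + 1 = m by omega]
        simp only [Function.iterate_zero_apply]
        rw [← e]
        exact Function.iterate_minimalPeriod
    · refine Finset.mem_image.mpr ⟨f^[i - 1] x, ?_, ?_⟩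
      · rw [hs]
        exact Finset.mem_image.mpr ⟨i - 1, Finset.mem_range.mpr (by omega), rfl⟩
      · have h1 : f (f^[i - 1] x) = f^[(i - 1) + 1] x :=
          (Function.iterate_succ_apply' f (i - 1) x).symm
        rw [h1]
        congr 1
        omega

lemma map_val_cyc (O : Cyc f) : Multiset.map f O.1.val = O.1.val := by
  have hinj : Set.InjOn f ↑O.1 :=
    Finset.injOn_of_card_image_eq (by rw [image_cyc])
  calc Multiset.map f O.1.val = (Finset.image f O.1).val :=
        (Finset.image_val_of_injOn hinj).symm
    _ = O.1.val := by rw [image_cyc]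

end Orbits

section Phi

variable {M : Type*} [Fintype M] [DecidableEq M] (f : M → M)

noncomputable def cycPt (O : Cyc f) : M := (Finset.card_pos.mp O.2.1).choose

lemma cycPt_mem (O : Cyc f) : cycPt f O ∈ O.1 := (Finset.card_pos.mp O.2.1).choose_spec

noncomputable def Phi (c : Cyc f → ℕ) : Multiset M := ∑ O : Cyc f, c O • O.1.val

lemma count_cyc_val {x : M} (O : Cyc f) :
    Multiset.count x O.1.val = if x ∈ O.1 then 1 else 0 := by
  split
  · next h => exact Multiset.count_eq_one_of_mem O.1.nodup h
  · next h => exact Multiset.count_eq_zero.mpr h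

lemma count_Phi (c : Cyc f → ℕ) {x : M} {O₀ : Cyc f} (h : x ∈ O₀.1) :
    Multiset.count x (Phi f c) = c O₀ := by
  rw [Phi, Multiset.count_sum']
  rw [Finset.sum_eq_single O₀]
  · rw [Multiset.count_nsmul, count_cyc_val, if_pos h, mul_one]
  · intro O _ hne
    rw [Multiset.count_nsmul, count_cyc_val, if_neg, mul_zero]
    intro hmem
    exact hne (cyc_disjoint f O O₀ hmem h)
  · intro hO
    exact absurd (Finset.mem_univ O₀) hO

lemma count_Phi_zero (c : Cyc f → ℕ) {x : M} (h : ∀ O : Cyc f, x ∉ O.1) :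
    Multiset.count x (Phi f c) = 0 := by
  rw [Phi, Multiset.count_sum']
  refine Finset.sum_eq_zero fun O _ => ?_
  rw [Multiset.count_nsmul, count_cyc_val, if_neg (h O), mul_zero]

lemma card_finset_sum {α β : Type*} (s : Finset α) (g : α → Multiset β) :
    Multiset.card (∑ a ∈ s, g a) = ∑ a ∈ s, Multiset.card (g a) := by
  classical
  induction s using Finset.induction_on with
  | empty => simp
  | @insert a t ha ih => rw [Finset.sum_insert ha, Finset.sum_insert ha, Multiset.card_add, ih]

lemma card_Phi (c : Cyc f → ℕ) :
    Multiset.card (Phi f c) = ∑ O : Cyc f, c O * O.1.card := by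
  rw [Phi, card_finset_sum]
  refine Finset.sum_congr rfl fun O _ => ?_
  rw [Multiset.card_nsmul]
  rfl

lemma map_Phi (c : Cyc f → ℕ) : Multiset.map f (Phi f c) = Phi f c := by
  rw [Phi]
  rw [show Multiset.map f (∑ O : Cyc f, c O • O.1.val) =
      ∑ O : Cyc f, Multiset.map f (c O • O.1.val) from
    map_sum (Multiset.mapAddMonoidHom f) _ _]
  refine Finset.sum_congr rfl fun O _ => ?_
  rw [Multiset.map_nsmul, map_val_cyc]

lemma mem_cyc_of_fixed {s : Multiset M} (hs : Multiset.map f s = s) {x : M} (hx : x ∈ s) :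
    ∃ O : Cyc f, x ∈ O.1 := by
  set S := s.toFinset with hSdef
  have hS : S.image f = S := by
    rw [hSdef, ← Multiset.toFinset_map, hs]
  have hmaps : ∀ a ∈ S, f a ∈ S := fun a ha => hS ▸ Finset.mem_image_of_mem f ha
  have hinj : Set.InjOn f ↑S := Finset.injOn_of_card_image_eq (by rw [hS])
  have iter_mem : ∀ n, ∀ a ∈ S, f^[n] a ∈ S := by
    intro n
    induction n with
    | zero => intro a ha; simpa using ha
    | succ n ih =>
      intro a ha
      rw [Function.iterate_succ_apply]
      exact ih _ (hmaps a ha)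
  have iter_inj : ∀ n, Set.InjOn f^[n] ↑S := by
    intro n
    induction n with
    | zero => intro a _ b _ h; simpa using h
    | succ n ih =>
      intro a ha b hb h
      rw [Function.iterate_succ_apply, Function.iterate_succ_apply] at h
      exact hinj ha hb (ih (hmaps a ha) (hmaps b hb) h)
  have hxS : x ∈ S := Multiset.mem_toFinset.mpr hx
  obtain ⟨i, j, hne, hij⟩ :=
    Finite.exists_ne_map_eq_of_infinite (fun i : ℕ => f^[i] x)
  wlog hlt : i < j generalizing i j
  · exact this j i hne.symm hij.symm (by omega)
  have hper : f^[j - i] x = x := by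
    have h1 : f^[i] (f^[j - i] x) = f^[i] x := by
      rw [← Function.iterate_add_apply, show i + (j - i) = j by omega]
      exact hij.symm
    exact iter_inj i (iter_mem _ _ hxS) hxS h1
  have hxper : x ∈ Function.periodicPts f := ⟨j - i, by omega, hper⟩
  exact ⟨mkCyc f hxper, mem_mkCyc f hxper⟩

lemma count_le_fixed {s : Multiset M} (hs : Multiset.map f s = s) (a : M) :
    Multiset.count a s ≤ Multiset.count (f a) s := by
  conv_rhs => rw [← hs]
  rw [Multiset.count_map, Multiset.count_eq_card_filter_eq]
  refine Multiset.card_le_card (Multiset.monotone_filter_right s ?_)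
  intro b hb
  rw [hb]

lemma count_iterate_fixed {s : Multiset M} (hs : Multiset.map f s = s) (a : M) (n : ℕ) :
    Multiset.count a s ≤ Multiset.count (f^[n] a) s := by
  induction n with
  | zero => simp
  | succ n ih =>
    refine le_trans ih ?_
    rw [Function.iterate_succ_apply']
    exact count_le_fixed f hs _

lemma count_eq_on_cyc {s : Multiset M} (hs : Multiset.map f s = s) {x : M}
    (hx : x ∈ Function.periodicPts f) (i : ℕ) :
    Multiset.count (f^[i] x) s = Multiset.count x s := by
  set m := Function.minimalPeriod f x with hm
  have hmpos : 0 < m := Function.minimalPeriod_pos_of_mem_periodicPts hx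
  refine le_antisymm ?_ (count_iterate_fixed f hs x i)
  rcases Nat.eq_zero_or_pos i with rfl | hipos
  · simp
  · have h1 : Multiset.count (f^[i] x) s ≤ Multiset.count (f^[i * m - i] (f^[i] x)) s :=
      count_iterate_fixed f hs _ _
    have h2 : f^[i * m - i] (f^[i] x) = x := by
      rw [← Function.iterate_add_apply, show i * m - i + i = i * m by
        have : i ≤ i * m := Nat.le_mul_of_pos_right i hmpos
        omega]
      have : Function.IsPeriodicPt f (m * i) x :=
        (Function.isPeriodicPt_minimalPeriod f x).mul_const i
      rw [mul_comm] at this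
      exact this
    rwa [h2] at h1

lemma fixed_eq_Phi {s : Multiset M} (hs : Multiset.map f s = s) :
    s = Phi f (fun O => Multiset.count (cycPt f O) s) := by
  refine Multiset.ext.mpr fun a => ?_
  by_cases hmem : ∃ O : Cyc f, a ∈ O.1
  · obtain ⟨O, hO⟩ := hmem
    rw [count_Phi f _ hO]
    obtain ⟨e, hsO⟩ := orbit_eq f O.2.1 O.2.2 hO
    have haper : a ∈ Function.periodicPts f :=
      Function.minimalPeriod_pos_iff_mem_periodicPts.mp (e ▸ O.2.1)
    have hpt : cycPt f O ∈ O.1 := cycPt_mem f O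
    rw [hsO] at hpt
    obtain ⟨j, hj, hjeq⟩ := Finset.mem_image.mp hpt
    rw [← hjeq, count_eq_on_cyc f hs haper j]
  · push_neg at hmem
    rw [count_Phi_zero f _ hmem]
    refine Multiset.count_eq_zero.mpr fun ha => ?_
    obtain ⟨O, hO⟩ := mem_cyc_of_fixed f hs ha
    exact hmem O hO

noncomputable def fixedEquiv (k : ℕ) :
    {s : Multiset M // Multiset.card s = k ∧ Multiset.map f s = s} ≃
    {c : Cyc f → ℕ // ∑ O : Cyc f, c O * O.1.card = k} where
  toFun s := ⟨fun O => Multiset.count (cycPt f O) s.1, by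
    have h := fixed_eq_Phi f s.2.2
    have h2 := card_Phi f (fun O => Multiset.count (cycPt f O) s.1)
    rw [← h, s.2.1] at h2
    exact h2.symm⟩
  invFun c := ⟨Phi f c.1, by rw [card_Phi]; exact c.2, map_Phi f c.1⟩
  left_inv s := Subtype.ext (fixed_eq_Phi f s.2.2).symm
  right_inv c := Subtype.ext (funext fun O => count_Phi f c.1 (cycPt_mem f O))

end Phi

section Final

variable {M : Type*} [Fintype M] [DecidableEq M] (f : M → M)

def cycFiberEquiv (m : ℕ) (hm : 1 ≤ m) :
    {O : Cyc f // O.1.card = m} ≃ {s : Finset M // IsPeriodicOrbit f m s} where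
  toFun O := ⟨O.1.1, by have h := O.1.2.2; rwa [O.2] at h⟩
  invFun s := ⟨⟨s.1, by
      obtain ⟨x, hsx, hc, hx⟩ := s.2
      constructor
      · rw [hc]; exact hm
      · rw [hc]; exact s.2⟩, by
      obtain ⟨x, hsx, hc, hx⟩ := s.2
      exact hc⟩
  left_inv O := Subtype.ext (Subtype.ext rfl)
  right_inv s := Subtype.ext rfl

lemma prod_cyc_eq :
    ∏ m ∈ Finset.Icc 1 (Fintype.card M),
      ((1 - (PowerSeries.X : PowerSeries ℤ) ^ m) ^ doldD f m) =
    ∏ O : Cyc f, (1 - (PowerSeries.X : PowerSeries ℤ) ^ O.1.card) := by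
  classical
  rw [← Finset.prod_fiberwise_of_maps_to (g := fun O : Cyc f => O.1.card)
    (t := Finset.Icc 1 (Fintype.card M)) (fun O _ => Finset.mem_Icc.mpr
      ⟨O.2.1, Finset.card_le_univ O.1⟩)
    (fun O => (1 - (PowerSeries.X : PowerSeries ℤ) ^ O.1.card))]
  refine Finset.prod_congr rfl fun m hm => ?_
  have hm1 : 1 ≤ m := (Finset.mem_Icc.mp hm).1
  have hconst : ∏ O ∈ Finset.univ.filter (fun O : Cyc f => O.1.card = m),
      (1 - (PowerSeries.X : PowerSeries ℤ) ^ O.1.card) =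
      ∏ _O ∈ Finset.univ.filter (fun O : Cyc f => O.1.card = m),
      (1 - (PowerSeries.X : PowerSeries ℤ) ^ m) := by
    refine Finset.prod_congr rfl fun O hO => ?_
    rw [(Finset.mem_filter.mp hO).2]
  rw [hconst, Finset.prod_const]
  congr 1
  rw [← Fintype.card_subtype]
  rw [← Nat.card_eq_fintype_card]
  rw [doldD]
  exact Nat.card_congr (cycFiberEquiv f m hm1).symm

end Final

theorem symmetricPower_genFun_mul_zeta_eq_one
    {M : Type*} [Fintype M] [DecidableEq M] (f : M → M) :
    (PowerSeries.mk fun k =>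
        (Nat.card {s : Multiset M // Multiset.card s = k ∧ Multiset.map f s = s} : ℤ)) *
      ∏ m ∈ Finset.Icc 1 (Fintype.card M),
        ((1 - (PowerSeries.X : PowerSeries ℤ) ^ m) ^ doldD f m) = 1 := by
  classical
  rw [prod_cyc_eq f]
  have hmk : (PowerSeries.mk fun k =>
      (Nat.card {s : Multiset M // Multiset.card s = k ∧ Multiset.map f s = s} : ℤ)) =
      PowerSeries.mk fun k =>
      (Nat.card {c : Cyc f → ℕ // (∀ O ∉ (Finset.univ : Finset (Cyc f)), c O = 0) ∧
        ∑ O ∈ Finset.univ, c O * O.1.card = k} : ℤ) := by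
    refine congrArg PowerSeries.mk (funext fun k => ?_)
    congr 1
    exact Nat.card_congr ((fixedEquiv f k).trans
      (Equiv.subtypeEquivRight (fun c => (and_iff_right (fun O hO =>
        absurd (Finset.mem_univ O) hO)).symm)))
  rw [hmk]
  exact genfun_aux (fun O : Cyc f => O.1.card) (fun O => O.2.1) Finset.univ
end

section
/- Let G be a finite group acting on a finite set X, and let f : X → X be a G-equivariant map (f(g • x) = g • f(x) for all g ∈ G, x ∈ X). Then f induces a well-defined self-map f̄ of the orbit set X/G by f̄([x]) = [f(x)], and #G · #{orbits ω ∈ X/G : f̄(ω) = ω} = ∑_{g ∈ G} #{x ∈ X : f(x) = g • x}. -/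
theorem card_fixed_orbits_mul_card_group
    {G X : Type*} [Group G] [Fintype G] [Finite X] [MulAction G X]
    (f : X → X) (hf : ∀ (g : G) (x : X), f (g • x) = g • f x) :
    ∃ fbar : Quotient (MulAction.orbitRel G X) → Quotient (MulAction.orbitRel G X),
      (∀ x : X, fbar (Quotient.mk (MulAction.orbitRel G X) x) =
          Quotient.mk (MulAction.orbitRel G X) (f x)) ∧
      Nat.card G * Nat.card {ω : Quotient (MulAction.orbitRel G X) // fbar ω = ω} =
        ∑ g : G, Nat.card {x : X // f x = g • x} := by
  classical
  have : Fintype X := Fintype.ofFinite X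
  set Q := Quotient (MulAction.orbitRel G X) with hQ
  have hrel : ∀ a b : X, MulAction.orbitRel G X a b →
      MulAction.orbitRel G X (f a) (f b) := by
    intro a b hab
    obtain ⟨g, hg⟩ := hab
    exact ⟨g, by rw [← hg, hf]⟩
  refine ⟨Quotient.map f hrel, fun x => rfl, ?_⟩
  set fbar : Q → Q := Quotient.map f hrel with hfbar
  -- step 1: for each x, card of {g // f x = g • x}
  have key : ∀ x : X, Nat.card {g : G // f x = g • x} =
      if fbar (Quotient.mk (MulAction.orbitRel G X) x) = Quotient.mk (MulAction.orbitRel G X) x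
      then Nat.card (MulAction.stabilizer G x) else 0 := by
    intro x
    by_cases h : fbar (Quotient.mk (MulAction.orbitRel G X) x) =
        Quotient.mk (MulAction.orbitRel G X) x
    · rw [if_pos h]
      have h' : MulAction.orbitRel G X (f x) x := Quotient.exact h
      obtain ⟨g₀, hg₀'⟩ := h'
      have hg₀ : g₀ • x = f x := hg₀'
      refine Nat.card_congr ?_
      refine ⟨fun p => ⟨g₀⁻¹ * p.1, ?_⟩, fun s => ⟨g₀ * s.1, ?_⟩, ?_, ?_⟩
      · have := p.2
        simp only [MulAction.mem_stabilizer_iff, mul_smul]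
        rw [← this, ← hg₀, inv_smul_smul]
      · have := s.2
        simp only [MulAction.mem_stabilizer_iff] at this
        rw [mul_smul, this, hg₀]
      · intro p; ext; simp
      · intro s; ext; simp
    · rw [if_neg h]
      have : IsEmpty {g : G // f x = g • x} := by
        constructor
        rintro ⟨g, hg⟩
        exact h (Quotient.sound ⟨g, hg.symm⟩)
      simp [Nat.card_of_isEmpty]
  -- step 2: swap the double sum
  have swap : ∑ g : G, Nat.card {x : X // f x = g • x} =
      ∑ x : X, Nat.card {g : G // f x = g • x} := by
    simp only [Nat.card_eq_fintype_card, Fintype.card_subtype, Finset.card_filter]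
    rw [Finset.sum_comm]
  rw [swap]
  -- step 3: group by orbit
  have grp : ∑ x : X, Nat.card {g : G // f x = g • x} =
      ∑ ω : Q, ∑ x ∈ Finset.univ.filter
        (fun x => Quotient.mk (MulAction.orbitRel G X) x = ω),
        Nat.card {g : G // f x = g • x} :=
    (Finset.sum_fiberwise _ _ _).symm
  rw [grp]
  -- step 4: evaluate each orbit's contribution
  have orbit_sum : ∀ ω : Q, (∑ x ∈ Finset.univ.filter
        (fun x => Quotient.mk (MulAction.orbitRel G X) x = ω),
        Nat.card {g : G // f x = g • x}) =
      if fbar ω = ω then Nat.card G else 0 := by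
    intro ω
    induction ω using Quotient.inductionOn with
    | h y =>
    by_cases h : fbar (Quotient.mk (MulAction.orbitRel G X) y) =
        Quotient.mk (MulAction.orbitRel G X) y
    · rw [if_pos h]
      have hall : ∀ x ∈ Finset.univ.filter
          (fun x => Quotient.mk (MulAction.orbitRel G X) x =
            Quotient.mk (MulAction.orbitRel G X) y),
          Nat.card {g : G // f x = g • x} = Nat.card (MulAction.stabilizer G x) := by
        intro x hx
        rw [Finset.mem_filter] at hx
        rw [key x, if_pos (by rw [hx.2]; exact h)]
      rw [Finset.sum_congr rfl hall]
      -- each stabilizer in the orbit has the same cardinality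
      have hstab : ∀ x ∈ Finset.univ.filter
          (fun x => Quotient.mk (MulAction.orbitRel G X) x =
            Quotient.mk (MulAction.orbitRel G X) y),
          Nat.card (MulAction.stabilizer G x) = Nat.card (MulAction.stabilizer G y) := by
        intro x hx
        rw [Finset.mem_filter] at hx
        exact Nat.card_congr
          (MulAction.stabilizerEquivStabilizerOfOrbitRel (Quotient.exact hx.2)).toEquiv
      rw [Finset.sum_congr rfl hstab, Finset.sum_const, smul_eq_mul]
      -- the fiber is the orbit of y
      have hfiber : (Finset.univ.filter
          (fun x => Quotient.mk (MulAction.orbitRel G X) x =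
            Quotient.mk (MulAction.orbitRel G X) y)).card =
          Nat.card (MulAction.orbit G y) := by
        rw [Nat.card_eq_fintype_card, Fintype.card_subtype]
        congr 1
        ext x
        simp only [Finset.mem_filter, Finset.mem_univ, true_and]
        exact ⟨fun hx => Quotient.exact hx, fun hx => Quotient.sound hx⟩
      rw [hfiber]
      have := MulAction.card_orbit_mul_card_stabilizer_eq_card_group G y
      simpa [Nat.card_eq_fintype_card] using this
    · rw [if_neg h]
      refine Finset.sum_eq_zero fun x hx => ?_
      rw [Finset.mem_filter] at hx
      rw [key x, if_neg (by rw [hx.2]; exact h)]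
  rw [Finset.sum_congr rfl fun ω _ => orbit_sum ω]
  rw [← Finset.sum_filter, Finset.sum_const, smul_eq_mul, mul_comm]
  congr 1
  rw [Nat.card_eq_fintype_card, Fintype.card_subtype]
end

section
/- Let K and M be finite sets, g a permutation of K, and f : M → M a function. Then the number of functions a : K → M satisfying a(g(k)) = f(a(k)) for all k ∈ K equals the product, over the orbits C of the cyclic group generated by g acting on K, of the number of fixed points of the iterate f^[#C]. -/
open Function MulAction

private lemma aux_iter_equivariant {K M : Type*} (g : Equiv.Perm K) (f : M → M)
    (a : K → M) (ha : ∀ k, a (g k) = f (a k)) (m : ℕ) (k : K) :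
    a (g^[m] k) = f^[m] (a k) := by
  induction m with
  | zero => simp
  | succ n ih =>
      rw [Function.iterate_succ_apply', Function.iterate_succ_apply', ha, ih]

private lemma aux_congr_iter {K M : Type*} (g : Equiv.Perm K) (f : M → M)
    (k0 : K) (x : M) (hx : f^[Function.minimalPeriod ⇑g k0] x = x)
    {s t : ℕ} (h : g^[s] k0 = g^[t] k0) : f^[s] x = f^[t] x := by
  wlog hst : s ≤ t generalizing s t
  · exact (this h.symm (le_of_not_ge hst)).symm
  obtain ⟨d, rfl⟩ := Nat.exists_eq_add_of_le hst
  have hper : Function.IsPeriodicPt ⇑g d k0 := by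
    have h2 : g^[s] (g^[d] k0) = g^[s] k0 := by
      rw [← Function.iterate_add_apply, ← h]
  -- h : g^[s] k0 = g^[s + d] k0
    exact (g.injective.iterate s h2)
  have hx' : Function.IsPeriodicPt f d x :=
    Function.IsPeriodicPt.trans_dvd hx hper.minimalPeriod_dvd
  rw [Function.iterate_add_apply, hx'.eq]

theorem card_equivariant_maps_eq_prod_orbits
    {K M : Type*} [Fintype K] [Fintype M] (g : Equiv.Perm K) (f : M → M) :
    Nat.card {a : K → M // ∀ k : K, a (g k) = f (a k)} =
      ∏ᶠ C : Quotient (MulAction.orbitRel (Subgroup.zpowers g) K),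
        Nat.card {x : M //
          f^[Nat.card (MulAction.orbit (Subgroup.zpowers g) (Quotient.out C))] x = x} := by
  classical
  haveI : Fintype (Quotient (MulAction.orbitRel (Subgroup.zpowers g) K)) := Fintype.ofFinite _
  set Q := Quotient (MulAction.orbitRel (Subgroup.zpowers g) K)
  set n : Q → ℕ := fun C => Nat.card (MulAction.orbit (Subgroup.zpowers g) (Quotient.out C))
    with hn_def
  -- orbit cardinality equals minimal period
  have hn : ∀ C : Q, n C = Function.minimalPeriod ⇑g (Quotient.out C) := by
    intro C
    have hsmul : (g • · : K → K) = ⇑g := funext fun k => rfl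
    show Nat.card (MulAction.orbit (Subgroup.zpowers g) (Quotient.out C)) = _
    rw [Nat.card_eq_fintype_card, ← MulAction.minimalPeriod_eq_card, hsmul]
  -- every point is reached from its orbit representative by a natural power
  have hreach : ∀ k : K, ∃ m : ℕ,
      g^[m] ((Quotient.mk (MulAction.orbitRel (Subgroup.zpowers g) K) k).out) = k := by
    intro k
    have hk : k ∈ MulAction.orbit (Subgroup.zpowers g)
        ((Quotient.mk (MulAction.orbitRel (Subgroup.zpowers g) K) k).out) := by
      rw [← MulAction.orbitRel_apply]
      exact (MulAction.orbitRel (Subgroup.zpowers g) K).iseqv.symm (Quotient.mk_out' k)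
    obtain ⟨⟨h, hh⟩, hk⟩ := hk
    obtain ⟨z, rfl⟩ := Subgroup.mem_zpowers_iff.mp hh
    have hN : (0:ℤ) < (orderOf g : ℤ) := by exact_mod_cast orderOf_pos g
    refine ⟨(z % orderOf g).toNat, ?_⟩
    have hz : g ^ ((z % orderOf g).toNat : ℤ) = g ^ z := by
      rw [Int.toNat_of_nonneg (Int.emod_nonneg z hN.ne')]
      exact zpow_mod_orderOf g z
    rw [Equiv.Perm.iterate_eq_pow, ← zpow_natCast, hz]
    exact hk
  choose m hm using hreach
  have e : {a : K → M // ∀ k : K, a (g k) = f (a k)} ≃ (∀ C : Q, {x : M // f^[n C] x = x}) :=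
    { toFun := fun a C => ⟨a.1 C.out, by
        have h1 := aux_iter_equivariant g f a.1 a.2 (n C) C.out
        rw [hn C] at h1 ⊢
        rw [← h1, Function.iterate_minimalPeriod]⟩
      invFun := fun x => ⟨fun k =>
        f^[m k] (x (Quotient.mk (MulAction.orbitRel (Subgroup.zpowers g) K) k)).1, by
        intro k
        have hQk : (Quotient.mk (MulAction.orbitRel (Subgroup.zpowers g) K) (g k))
            = Quotient.mk (MulAction.orbitRel (Subgroup.zpowers g) K) k := by
          refine Quotient.sound ?_
          show MulAction.orbitRel (Subgroup.zpowers g) K (g k) k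
          rw [MulAction.orbitRel_apply]
          exact ⟨⟨g, Subgroup.mem_zpowers g⟩, rfl⟩
        have hmk := hm (g k)
        show f^[m (g k)] (x (Quotient.mk (MulAction.orbitRel (Subgroup.zpowers g) K)
            (g k))).1 = f (f^[m k]
            (x (Quotient.mk (MulAction.orbitRel (Subgroup.zpowers g) K) k)).1)
        rw [hQk] at hmk ⊢
        set X := (x (Quotient.mk (MulAction.orbitRel (Subgroup.zpowers g) K) k)).1 with hX
        have hx : f^[Function.minimalPeriod ⇑g
            ((Quotient.mk (MulAction.orbitRel (Subgroup.zpowers g) K) k).out)] X = X := by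
          rw [← hn]
          exact (x _).2
        have hiter : g^[m (g k)] ((Quotient.mk (MulAction.orbitRel
            (Subgroup.zpowers g) K) k).out) = g^[m k + 1]
            ((Quotient.mk (MulAction.orbitRel (Subgroup.zpowers g) K) k).out) := by
          rw [Function.iterate_succ_apply', hm k, hmk]
        rw [aux_congr_iter g f _ X hx hiter, Function.iterate_succ_apply']⟩
      left_inv := by
        intro a
        apply Subtype.ext
        funext k
        show f^[m k] (a.1 _) = a.1 k
        rw [← aux_iter_equivariant g f a.1 a.2 (m k), hm k]
      right_inv := by
        intro x
        funext C
        apply Subtype.ext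
        show f^[m C.out] (x (Quotient.mk (MulAction.orbitRel
            (Subgroup.zpowers g) K) C.out)).1 = (x C).1
        have hC : (Quotient.mk (MulAction.orbitRel (Subgroup.zpowers g) K) C.out) = C :=
          Quotient.out_eq C
        have hmk := hm C.out
        rw [hC] at hmk ⊢
        have hx : f^[Function.minimalPeriod ⇑g C.out] (x C).1 = (x C).1 := by
          rw [← hn]
          exact (x C).2
        have hiter : g^[m C.out] C.out = g^[0] C.out := hmk
        rw [aux_congr_iter g f _ _ hx hiter, Function.iterate_zero_apply] }
  rw [Nat.card_congr e, Nat.card_pi, finprod_eq_prod_of_fintype]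
end

section
/- Let G be a finite group, K a finite G-set, M a finite set, and f : M → M a function. Let G act on the set M^K of functions K → M by (g • a)(k) = a(g⁻¹ • k). The map a ↦ f ∘ a is G-equivariant and induces a self-map of the orbit set M^K / G; the number of its fixed points, multiplied by #G, equals ∑_{g ∈ G} ∏_{n ≥ 1} ( ∑_{m ∣ n} m · D_m(f) )^{d_g(n)}, where d_g(n) is the number of orbits of length n of the cyclic group generated by g acting on K (so the product over n is finite). -/
-- `G` acts on `K → M` by `(g • a) k = a (g⁻¹ • k)`.
attribute [local instance] arrowAction


set_option linter.unusedSectionVars false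
set_option maxHeartbeats 1000000

open Function MulAction Subgroup

section AuxC
variable {M : Type*} [Fintype M] [DecidableEq M]

variable {M : Type*} [Fintype M] [DecidableEq M]

/-- the canonical finset orbit of a point -/
noncomputable def pOrb (f : M → M) (x : M) : Finset M :=
  (Finset.range (minimalPeriod f x)).image (fun i => f^[i] x)

lemma card_pOrb (f : M → M) (x : M) : (pOrb f x).card = minimalPeriod f x := by
  rw [pOrb, Finset.card_image_of_injOn, Finset.card_range]
  simpa [Finset.coe_range] using iterate_injOn_Iio_minimalPeriod (f := f) (x := x)

lemma iterate_mem_pOrb {f : M → M} {x : M} (h : 0 < minimalPeriod f x) (j : ℕ) :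
    f^[j] x ∈ pOrb f x := by
  rw [← iterate_mod_minimalPeriod_eq]
  exact Finset.mem_image_of_mem _ (Finset.mem_range.2 (Nat.mod_lt _ h))

lemma pOrb_isPeriodicOrbit {f : M → M} {x : M} :
    IsPeriodicOrbit f (minimalPeriod f x) (pOrb f x) :=
  ⟨x, rfl, card_pOrb f x, iterate_minimalPeriod⟩

lemma IsPeriodicOrbit.minimalPeriod_out {f : M → M} {m : ℕ} {s : Finset M}
    (hm : 0 < m) (hs : IsPeriodicOrbit f m s) {y : M} (hy : y ∈ s) :
    minimalPeriod f y = m ∧ pOrb f y = s := by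
  obtain ⟨x, rfl, hcard, hx⟩ := hs
  have hpx : IsPeriodicPt f m x := hx
  have hxmem : x ∈ periodicPts f := mk_mem_periodicPts hm hpx
  have hmpx : minimalPeriod f x = m := by
    refine le_antisymm (hpx.minimalPeriod_le hm) ?_
    by_contra hlt
    push_neg at hlt
    have hsub : (Finset.range m).image (fun i => f^[i] x) ⊆ pOrb f x := by
      intro z hz
      obtain ⟨i, _, rfl⟩ := Finset.mem_image.1 hz
      exact iterate_mem_pOrb (minimalPeriod_pos_of_mem_periodicPts hxmem) i
    have := (Finset.card_le_card hsub).trans_eq (card_pOrb f x)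
    omega
  obtain ⟨i, hi, rfl⟩ := Finset.mem_image.1 hy
  have h1 : minimalPeriod f (f^[i] x) = m := by
    rw [minimalPeriod_apply_iterate hxmem, hmpx]
  refine ⟨h1, ?_⟩
  have hsub : pOrb f (f^[i] x) ⊆ (Finset.range m).image (fun i => f^[i] x) := by
    intro z hz
    obtain ⟨j, _, rfl⟩ := Finset.mem_image.1 hz
    rw [← Function.iterate_add_apply]
    have : f^[j+i] x = f^[(j+i) % m] x := by
      conv_lhs => rw [← Nat.div_add_mod (j+i) m]
      rw [← hmpx] at *
      rw [add_comm, Function.iterate_add_apply, Function.iterate_mul]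
      congr 1
      have h2 : f^[minimalPeriod f x * ((j+i)/minimalPeriod f x)] x = x :=
        (Function.isPeriodicPt_minimalPeriod f x).mul_const ((j+i)/minimalPeriod f x)
      rwa [Function.iterate_mul] at h2
    rw [this]
    exact Finset.mem_image_of_mem _ (Finset.mem_range.2 (Nat.mod_lt _ hm))
  refine Finset.eq_of_subset_of_card_le hsub ?_
  rw [hcard, card_pOrb, h1]

lemma natCard_sigma' {ι : Type*} [Fintype ι] (β : ι → Type*) [∀ i, Fintype (β i)] :
    Nat.card (Σ i, β i) = ∑ i, Nat.card (β i) := by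
  simp [Nat.card_eq_fintype_card]

lemma natCard_minimalPeriod_eq (f : M → M) {m : ℕ} (hm : 0 < m) :
    Nat.card {x : M // minimalPeriod f x = m} = m * doldD f m := by
  classical
  have key : ∀ x : {x : M // minimalPeriod f x = m}, IsPeriodicOrbit f m (pOrb f x.1) := by
    rintro ⟨x, hx⟩
    simpa [hx] using pOrb_isPeriodicOrbit (f := f) (x := x)
  let ψ : {x : M // minimalPeriod f x = m} → {s : Finset M // IsPeriodicOrbit f m s} :=
    fun x => ⟨pOrb f x.1, key x⟩
  have e := (Equiv.sigmaFiberEquiv ψ).symm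
  rw [Nat.card_congr e, natCard_sigma']
  have hfib : ∀ s : {s : Finset M // IsPeriodicOrbit f m s},
      Nat.card {x : {x : M // minimalPeriod f x = m} // ψ x = s} = m := by
    intro s
    have e2 : {x : {x : M // minimalPeriod f x = m} // ψ x = s} ≃ {y : M // y ∈ s.1} :=
      { toFun := fun x => ⟨x.1.1, by
          have h0 : x.1.1 ∈ pOrb f x.1.1 := by
            have := iterate_mem_pOrb (f := f) (x := x.1.1) (by rw [x.1.2]; exact hm) 0
            simpa using this
          have : pOrb f x.1.1 = s.1 := congrArg Subtype.val x.2
          rwa [this] at h0⟩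
        invFun := fun y => ⟨⟨y.1, (IsPeriodicOrbit.minimalPeriod_out hm s.2 y.2).1⟩,
          Subtype.ext (IsPeriodicOrbit.minimalPeriod_out hm s.2 y.2).2⟩
        left_inv := fun x => by ext; rfl
        right_inv := fun y => by ext; rfl }
    rw [Nat.card_congr e2, Nat.card_eq_fintype_card, Fintype.card_coe, s.2.choose_spec.2.1]
  rw [Finset.sum_congr rfl (fun s _ => hfib s), Finset.sum_const, Finset.card_univ,
    smul_eq_mul, mul_comm, doldD, Nat.card_eq_fintype_card]

lemma natCard_fixed_iterate (f : M → M) {n : ℕ} (hn : 1 ≤ n) :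
    Nat.card {x : M // f^[n] x = x} = ∑ m ∈ n.divisors, m * doldD f m := by
  classical
  rw [Nat.card_eq_fintype_card, Fintype.card_subtype]
  rw [Finset.card_eq_sum_card_fiberwise (f := fun x => minimalPeriod f x)
    (t := n.divisors) (fun x hx => by
      rw [Finset.mem_coe, Nat.mem_divisors]
      refine ⟨?_, by omega⟩
      have : f^[n] x = x := (Finset.mem_filter.1 (Finset.mem_coe.1 hx)).2
      exact Function.IsPeriodicPt.minimalPeriod_dvd this)]
  refine Finset.sum_congr rfl fun m hmd => ?_
  obtain ⟨hdvd, -⟩ := Nat.mem_divisors.1 hmd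
  have hmpos : 0 < m := Nat.pos_of_mem_divisors hmd
  rw [← natCard_minimalPeriod_eq f hmpos, Nat.card_eq_fintype_card, Fintype.card_subtype]
  congr 1
  ext x
  simp only [Finset.mem_filter, Finset.mem_univ, true_and, and_iff_right_iff_imp]
  intro hx
  have : Function.IsPeriodicPt f n x := by
    rw [isPeriodicPt_iff_minimalPeriod_dvd, hx]; exact hdvd
  exact this

end AuxC

section AuxB
variable {M : Type*}


lemma iter_conj {K' : Type*} {σ : K' → K'} {f : M → M} {b : K' → M}
    (hb : ∀ k, b (σ k) = f (b k)) (i : ℕ) (k : K') : b (σ^[i] k) = f^[i] (b k) := by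
  induction i with
  | zero => rfl
  | succ i ih => rw [Function.iterate_succ_apply', Function.iterate_succ_apply', hb, ih]

lemma card_conj_eq_card_fixed {K' : Type*} (σ : K' → K') (x₀ : K')
    (hpos : 0 < minimalPeriod σ x₀)
    (hcov : ∀ k : K', ∃ i, i < minimalPeriod σ x₀ ∧ σ^[i] x₀ = k) (f : M → M) :
    Nat.card {b : K' → M // ∀ k, b (σ k) = f (b k)} =
      Nat.card {x : M // f^[minimalPeriod σ x₀] x = x} := by
  set n := minimalPeriod σ x₀ with hn
  have uniq : ∀ i j, i < n → j < n → σ^[i] x₀ = σ^[j] x₀ → i = j := fun i j hi hj h =>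
    iterate_injOn_Iio_minimalPeriod hi hj h
  classical
  let idx : K' → ℕ := fun k => Nat.find (hcov k)
  have hidx : ∀ k, idx k < n ∧ σ^[idx k] x₀ = k := fun k => Nat.find_spec (hcov k)
  have idx_eq : ∀ i, i < n → idx (σ^[i] x₀) = i := fun i hi =>
    uniq _ _ (hidx _).1 hi (hidx _).2
  refine Nat.card_congr
    { toFun := fun b => ⟨b.1 x₀, by
        have h0 : σ^[n] x₀ = x₀ := iterate_minimalPeriod
        have := iter_conj b.2 n x₀
        rw [h0] at this
        exact this.symm⟩
      invFun := fun x => ⟨fun k => f^[idx k] x.1, by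
        intro k
        obtain ⟨hik, hk⟩ := hidx k
        show f^[idx (σ k)] x.1 = f (f^[idx k] x.1)
        by_cases hsucc : idx k + 1 < n
        · have h3 : σ k = σ^[idx k + 1] x₀ := by
            rw [Function.iterate_succ_apply', hk]
          rw [h3, idx_eq _ hsucc, Function.iterate_succ_apply']
        · have hns : idx k + 1 = n := by omega
          have h1 : σ k = x₀ := by
            have h3 : σ k = σ^[idx k + 1] x₀ := by rw [Function.iterate_succ_apply', hk]
            have h0 : σ^[n] x₀ = x₀ := iterate_minimalPeriod
            rw [h3, hns, h0]
          have h2 : idx x₀ = 0 := idx_eq 0 hpos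
          rw [h1, h2]
          have h4 : f^[n] x.1 = x.1 := x.2
          have h5 : f (f^[idx k] x.1) = f^[idx k + 1] x.1 :=
            (Function.iterate_succ_apply' f _ _).symm
          rw [Function.iterate_zero_apply, h5, hns]
          exact h4.symm⟩
      left_inv := fun b => by
        apply Subtype.ext
        funext k
        have : b.1 k = b.1 (σ^[idx k] x₀) := by rw [(hidx k).2]
        rw [this, iter_conj b.2]
      right_inv := fun x => by
        apply Subtype.ext
        show f^[idx x₀] x.1 = x.1
        have h2 : idx x₀ = 0 := idx_eq 0 hpos
        rw [h2, Function.iterate_zero_apply] }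

lemma minimalPeriod_eq_of_iff {A B : Type*} {σ : A → A} {τ : B → B} {a : A} {b : B}
    (h : ∀ i, IsPeriodicPt σ i a ↔ IsPeriodicPt τ i b) :
    minimalPeriod σ a = minimalPeriod τ b := by
  by_cases ha : a ∈ periodicPts σ
  · obtain ⟨i, hi, hp⟩ := mem_periodicPts.1 ha
    have hb : b ∈ periodicPts τ := mem_periodicPts.2 ⟨i, hi, (h i).1 hp⟩
    exact le_antisymm
      (((h _).2 (isPeriodicPt_minimalPeriod τ b)).minimalPeriod_le
        (minimalPeriod_pos_of_mem_periodicPts hb))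
      (((h _).1 (isPeriodicPt_minimalPeriod σ a)).minimalPeriod_le
        (minimalPeriod_pos_of_mem_periodicPts ha))
  · have hb : b ∉ periodicPts τ := fun hb => ha (mem_periodicPts.2 (by
      obtain ⟨i, hi, hp⟩ := mem_periodicPts.1 hb
      exact ⟨i, hi, (h i).2 hp⟩))
    rw [minimalPeriod_eq_zero_of_notMem_periodicPts ha,
      minimalPeriod_eq_zero_of_notMem_periodicPts hb]

open MulAction Subgroup

section GroupPart

variable {G K : Type*} [Group G] [MulAction G K]

/-- The fiber of the orbit-space projection over `C`. -/
def Ksub (g : G) (C : Quotient (orbitRel (zpowers g) K)) : Type _ :=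
  {k : K // Quotient.mk (orbitRel (zpowers g) K) k = C}

def sigmaC (g : G) (C : Quotient (orbitRel (zpowers g) K)) : Ksub g C → Ksub g C :=
  fun k => ⟨g⁻¹ • k.1, by
    have h1 : Quotient.mk (orbitRel (zpowers g) K) (g⁻¹ • k.1) =
        Quotient.mk (orbitRel (zpowers g) K) k.1 :=
      Quotient.sound ⟨⟨g⁻¹, inv_mem (mem_zpowers g)⟩, rfl⟩
    rw [h1, k.2]⟩

noncomputable def x0C (g : G) (C : Quotient (orbitRel (zpowers g) K)) : Ksub g C :=
  ⟨C.out, Quotient.out_eq C⟩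

lemma val_iterate_sigmaC (g : G) (C : Quotient (orbitRel (zpowers g) K))
    (i : ℕ) (k : Ksub g C) : ((sigmaC g C)^[i] k).1 = (g⁻¹ • ·)^[i] k.1 := by
  induction i with
  | zero => rfl
  | succ i ih =>
    rw [Function.iterate_succ_apply', Function.iterate_succ_apply']
    show g⁻¹ • ((sigmaC g C)^[i] k).1 = _
    rw [ih]

lemma mp_sigmaC_eq_inv (g : G) (C : Quotient (orbitRel (zpowers g) K)) :
    Function.minimalPeriod (sigmaC g C) (x0C g C) =
      Function.minimalPeriod (g⁻¹ • · : K → K) C.out := by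
  refine minimalPeriod_eq_of_iff fun i => ?_
  unfold Function.IsPeriodicPt Function.IsFixedPt
  erw [Subtype.ext_iff, val_iterate_sigmaC]
  rfl

lemma mp_inv_eq_mp (g : G) (k : K) :
    Function.minimalPeriod (g⁻¹ • · : K → K) k = Function.minimalPeriod (g • · : K → K) k := by
  refine minimalPeriod_eq_of_iff fun i => ?_
  unfold Function.IsPeriodicPt Function.IsFixedPt
  rw [smul_iterate, smul_iterate, inv_pow, inv_smul_eq_iff, eq_comm]

lemma mp_sigmaC [Fintype K] (g : G) (C : Quotient (orbitRel (zpowers g) K)) :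
    Function.minimalPeriod (sigmaC g C) (x0C g C) =
      Nat.card (orbit (zpowers g) (Quotient.out C)) := by
  classical
  rw [mp_sigmaC_eq_inv, mp_inv_eq_mp, minimalPeriod_eq_card, Nat.card_eq_fintype_card]

lemma mp_sigmaC_pos [Fintype K] (g : G) (C : Quotient (orbitRel (zpowers g) K)) :
    0 < Function.minimalPeriod (sigmaC g C) (x0C g C) := by
  rw [mp_sigmaC]
  have : Nonempty (orbit (zpowers g) (Quotient.out C)) := (nonempty_orbit _).to_subtype
  exact Nat.card_pos

lemma cover_sigmaC [Fintype K] (g : G) (C : Quotient (orbitRel (zpowers g) K))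
    (k : Ksub g C) :
    ∃ i, i < Function.minimalPeriod (sigmaC g C) (x0C g C) ∧ (sigmaC g C)^[i] (x0C g C) = k := by
  classical
  set n1 : ℕ := Function.minimalPeriod (g • · : K → K) C.out with hn1
  have hmp : Function.minimalPeriod (sigmaC g C) (x0C g C) = n1 := by
    rw [mp_sigmaC_eq_inv, mp_inv_eq_mp]
  have hpos : 0 < n1 := by
    rw [← hmp]; exact mp_sigmaC_pos g C
  -- express k as a power of g acting on C.out
  have hmem : k.1 ∈ orbit (zpowers g) (Quotient.out C) := by
    have := k.2.trans (Quotient.out_eq C).symm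
    exact Quotient.exact this
  obtain ⟨h, hh⟩ := hmem
  obtain ⟨z, hz⟩ := mem_zpowers_iff.1 h.2
  have hk : g ^ z • Quotient.out C = k.1 := by
    rw [hz]; exact hh
  set i : ℕ := ((-z) % (n1 : ℤ)).toNat with hi
  have h0 : (0:ℤ) < (n1:ℤ) := by exact_mod_cast hpos
  have hnonneg : 0 ≤ (-z) % (n1 : ℤ) := Int.emod_nonneg _ (by omega)
  have hlt : (-z) % (n1 : ℤ) < n1 := Int.emod_lt_of_pos _ h0
  refine ⟨i, by rw [hmp]; omega, ?_⟩
  apply Subtype.ext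
  rw [val_iterate_sigmaC]
  show (g⁻¹ • ·)^[i] (Quotient.out C) = k.1
  rw [smul_iterate]
  have hcast : ((g⁻¹) ^ i : G) = g ^ (-(i:ℤ)) := by
    rw [zpow_neg, ← zpow_natCast, ← inv_zpow]
  rw [hcast, ← hk]
  have hw : g ^ (-(i:ℤ) - z) • Quotient.out C = Quotient.out C := by
    rw [zpow_smul_eq_iff_minimalPeriod_dvd, ← hn1]
    refine ⟨(-z) / n1, ?_⟩
    have : (i : ℤ) = (-z) % (n1:ℤ) := by omega
    rw [this, Int.emod_def]
    ring
  calc g ^ (-(i:ℤ)) • Quotient.out C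
      = g ^ (z + (-(i:ℤ) - z)) • Quotient.out C := by ring_nf
    _ = g ^ z • (g ^ (-(i:ℤ) - z) • Quotient.out C) := by rw [zpow_add, mul_smul]
    _ = g ^ z • Quotient.out C := by rw [hw]

end GroupPart

lemma Ksub_congr {G K M : Type*} [Group G] [MulAction G K] {g : G}
    (b : ∀ C : Quotient (orbitRel (zpowers g) K), Ksub g C → M)
    {C C' : Quotient (orbitRel (zpowers g) K)} (h : C = C') (x : K)
    (p : Quotient.mk (orbitRel (zpowers g) K) x = C)
    (p' : Quotient.mk (orbitRel (zpowers g) K) x = C') :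
    b C ⟨x, p⟩ = b C' ⟨x, p'⟩ := by subst h; rfl

lemma card_twisted {G K : Type*} [Group G] [Fintype K] [Fintype M] [DecidableEq M]
    [MulAction G K] (g : G) (f : M → M)
    [Fintype (Quotient (orbitRel (zpowers g) K))] :
    Nat.card {a : K → M // ∀ k : K, a (g⁻¹ • k) = f (a k)} =
      ∏ C : Quotient (orbitRel (zpowers g) K),
        Nat.card {x : M // f^[Nat.card (orbit (zpowers g) (Quotient.out C))] x = x} := by
  classical
  have E : {a : K → M // ∀ k : K, a (g⁻¹ • k) = f (a k)} ≃
      ∀ C : Quotient (orbitRel (zpowers g) K),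
        {b : Ksub g C → M // ∀ k, b (sigmaC g C k) = f (b k)} :=
    { toFun := fun a C => ⟨fun k => a.1 k.1, fun k => a.2 k.1⟩
      invFun := fun b => ⟨fun k => (b (Quotient.mk _ k)).1 ⟨k, rfl⟩, by
        intro k
        have hcond := (b (Quotient.mk _ k)).2 ⟨k, rfl⟩
        have heq : Quotient.mk (orbitRel (zpowers g) K) (g⁻¹ • k) =
            Quotient.mk (orbitRel (zpowers g) K) k :=
          Quotient.sound ⟨⟨g⁻¹, inv_mem (mem_zpowers g)⟩, rfl⟩
        rw [← hcond]
        exact Ksub_congr (fun C => (b C).1) heq (g⁻¹ • k) rfl heq⟩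
      left_inv := fun a => Subtype.ext (funext fun k => rfl)
      right_inv := fun b => by
        funext C
        apply Subtype.ext
        funext k
        show (b (Quotient.mk _ k.1)).1 ⟨k.1, rfl⟩ = (b C).1 k
        exact Ksub_congr (fun C => (b C).1) k.2 k.1 rfl k.2 }
  rw [Nat.card_congr E, Nat.card_pi]
  refine Finset.prod_congr rfl fun C _ => ?_
  have h := card_conj_eq_card_fixed (sigmaC g C) (x0C g C) (mp_sigmaC_pos g C)
    (cover_sigmaC g C) f
  rw [h, mp_sigmaC]

end AuxB

section AuxA



lemma burnside_twisted {G X : Type*} [Group G] [Fintype G] [Fintype X] [MulAction G X]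
    (F : X → X) (Fbar : Quotient (orbitRel G X) → Quotient (orbitRel G X))
    (hFbar : ∀ a : X, Fbar (Quotient.mk (orbitRel G X) a) = Quotient.mk (orbitRel G X) (F a)) :
    Nat.card G * Nat.card {ω : Quotient (orbitRel G X) // Fbar ω = ω} =
      ∑ g : G, Nat.card {a : X // g • a = F a} := by
  classical
  -- total set P
  let P := {p : G × X // p.1 • p.2 = F p.2}
  have e1 : (Σ g : G, {a : X // g • a = F a}) ≃ P :=
    { toFun := fun q => ⟨(q.1, q.2.1), q.2.2⟩
      invFun := fun p => ⟨p.1.1, p.1.2, p.2⟩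
      left_inv := fun q => rfl
      right_inv := fun p => rfl }
  have h1 : ∑ g : G, Nat.card {a : X // g • a = F a} = Nat.card P := by
    rw [← Nat.card_congr e1, natCard_sigma']
  -- projection to fixed orbits
  let π : P → {ω : Quotient (orbitRel G X) // Fbar ω = ω} := fun p =>
    ⟨Quotient.mk (orbitRel G X) p.1.2, by
      rw [hFbar]
      exact Quotient.sound ⟨p.1.1, p.2⟩⟩
  have e2 := Equiv.sigmaFiberEquiv π
  have h2 : Nat.card P = ∑ ω : {ω : Quotient (orbitRel G X) // Fbar ω = ω},
      Nat.card {p : P // π p = ω} := by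
    rw [← Nat.card_congr e2, natCard_sigma']
  -- each fiber has cardinality #G
  have h3 : ∀ ω : {ω : Quotient (orbitRel G X) // Fbar ω = ω},
      Nat.card {p : P // π p = ω} = Nat.card G := by
    intro ω
    have e3 : {p : P // π p = ω} ≃
        Σ a : {a : X // Quotient.mk (orbitRel G X) a = ω.1}, {g : G // g • a.1 = F a.1} :=
      { toFun := fun p => ⟨⟨p.1.1.2, congrArg Subtype.val p.2⟩, ⟨p.1.1.1, p.1.2⟩⟩
        invFun := fun q => ⟨⟨(q.2.1, q.1.1), q.2.2⟩, Subtype.ext q.1.2⟩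
        left_inv := fun p => rfl
        right_inv := fun q => rfl }
    rw [Nat.card_congr e3, natCard_sigma']
    -- each a in the class: #{g // g•a = F a} = #stab a
    have h4 : ∀ a : {a : X // Quotient.mk (orbitRel G X) a = ω.1},
        Nat.card {g : G // g • a.1 = F a.1} = Nat.card (stabilizer G a.1) := by
      intro a
      have hrel : Quotient.mk (orbitRel G X) (F a.1) = Quotient.mk (orbitRel G X) a.1 := by
        rw [← hFbar, a.2, ω.2]
      obtain ⟨g₀, hg₀'⟩ : F a.1 ∈ orbit G a.1 := Quotient.exact hrel
      have hg₀ : g₀ • a.1 = F a.1 := hg₀'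
      have e4 : {g : G // g • a.1 = F a.1} ≃ stabilizer G a.1 :=
        { toFun := fun g => ⟨g₀⁻¹ * g.1, by
            rw [mem_stabilizer_iff, mul_smul, g.2, ← hg₀, inv_smul_smul]⟩
          invFun := fun s => ⟨g₀ * s.1, by
            rw [mul_smul, s.2, hg₀]⟩
          left_inv := fun g => by ext; simp
          right_inv := fun s => by ext; simp }
      rw [Nat.card_congr e4]
    rw [Finset.sum_congr rfl fun a _ => h4 a]
    -- all stabilizers in the class have the same cardinality
    set a₀ := ω.1.out with ha₀
    have h5 : ∀ a : {a : X // Quotient.mk (orbitRel G X) a = ω.1},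
        Nat.card (stabilizer G a.1) = Nat.card (stabilizer G a₀) := by
      intro a
      have hrel : orbitRel G X a.1 a₀ := by
        apply Quotient.exact
        rw [a.2, ha₀, Quotient.out_eq]
      exact Nat.card_congr (stabilizerEquivStabilizerOfOrbitRel hrel).toEquiv
    rw [Finset.sum_congr rfl fun a _ => h5 a, Finset.sum_const, Finset.card_univ, smul_eq_mul]
    -- #class = #orbit a₀
    have e5 : {a : X // Quotient.mk (orbitRel G X) a = ω.1} ≃ orbit G a₀ :=
      { toFun := fun a => ⟨a.1, Quotient.exact (a.2.trans (Quotient.out_eq ω.1).symm)⟩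
        invFun := fun b => ⟨b.1, by
          rw [← Quotient.out_eq ω.1]
          exact Quotient.sound b.2⟩
        left_inv := fun a => rfl
        right_inv := fun b => rfl }
    rw [← Nat.card_eq_fintype_card, Nat.card_congr e5]
    -- orbit-stabilizer
    rw [Nat.card_coe_set_eq, ← index_stabilizer, index_mul_card]
  rw [h1, h2, Finset.sum_congr rfl fun ω _ => h3 ω, Finset.sum_const, Finset.card_univ,
    smul_eq_mul, ← Nat.card_eq_fintype_card, mul_comm]

end AuxA

theorem card_fixed_orbits_of_maps_eq_sum_prod
    {G K M : Type*} [Group G] [Fintype G] [Fintype K] [Fintype M] [DecidableEq M]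
    [MulAction G K] (f : M → M) :
    ∃ fbar : Quotient (MulAction.orbitRel G (K → M)) →
        Quotient (MulAction.orbitRel G (K → M)),
      (∀ a : K → M, fbar (Quotient.mk (MulAction.orbitRel G (K → M)) a) =
          Quotient.mk (MulAction.orbitRel G (K → M)) (f ∘ a)) ∧
      Nat.card G * Nat.card {ω : Quotient (MulAction.orbitRel G (K → M)) // fbar ω = ω} =
        ∑ g : G, ∏ᶠ (n : ℕ) (_ : 1 ≤ n),
          (∑ m ∈ n.divisors, m * doldD f m) ^
            Nat.card {C : Quotient (MulAction.orbitRel (Subgroup.zpowers g) K) //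
              Nat.card (MulAction.orbit (Subgroup.zpowers g) (Quotient.out C)) = n} := by
  classical
  have hmap : ∀ a b : K → M, MulAction.orbitRel G (K → M) a b →
      MulAction.orbitRel G (K → M) (f ∘ a) (f ∘ b) := by
    rintro a b ⟨g, rfl⟩
    exact ⟨g, rfl⟩
  refine ⟨Quotient.map (fun a => f ∘ a) hmap, fun a => rfl, ?_⟩
  rw [burnside_twisted (fun a => f ∘ a) (Quotient.map (fun a => f ∘ a) hmap) (fun a => rfl)]
  refine Finset.sum_congr rfl fun g _ => ?_
  letI : Fintype (Quotient (orbitRel (zpowers g) K)) := Quotient.fintype _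
  have e_cond : {a : K → M // g • a = f ∘ a} ≃
      {a : K → M // ∀ k : K, a (g⁻¹ • k) = f (a k)} :=
    Equiv.subtypeEquivRight fun a => by rw [funext_iff]; exact Iff.rfl
  rw [Nat.card_congr e_cond, card_twisted g f]
  set nO : Quotient (orbitRel (zpowers g) K) → ℕ :=
    fun C => Nat.card (orbit (zpowers g) (Quotient.out C)) with hnO
  set T : ℕ → ℕ := fun n => ∑ m ∈ n.divisors, m * doldD f m with hT
  set D : ℕ → ℕ := fun n => Nat.card {C : Quotient (orbitRel (zpowers g) K) // nO C = n}
    with hD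
  have hpos : ∀ C, 1 ≤ nO C := fun C => by
    have : Nonempty (orbit (zpowers g) (Quotient.out C)) := (nonempty_orbit _).to_subtype
    exact Nat.card_pos
  have hfac : ∀ C, Nat.card {x : M // f^[nO C] x = x} = T (nO C) :=
    fun C => natCard_fixed_iterate f (hpos C)
  rw [Finset.prod_congr rfl fun C _ => hfac C]
  set img := Finset.image nO Finset.univ with himg
  have hgrp : ∏ C, T (nO C) = ∏ n ∈ img, T n ^ (Finset.univ.filter fun C => nO C = n).card := by
    rw [← Finset.prod_fiberwise_of_maps_to
      (fun C _ => Finset.mem_image_of_mem nO (Finset.mem_univ C)) (fun C => T (nO C))]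
    refine Finset.prod_congr rfl fun n hn => ?_
    rw [Finset.prod_congr rfl (fun C hC => by rw [(Finset.mem_filter.1 hC).2]),
      Finset.prod_const]
  have hDcard : ∀ n, D n = (Finset.univ.filter fun C => nO C = n).card := fun n => by
    show Nat.card {C : Quotient (orbitRel (zpowers g) K) // nO C = n} = _
    rw [Nat.card_eq_fintype_card, Fintype.card_subtype]
  have hfin : (∏ᶠ (n : ℕ) (_ : 1 ≤ n), T n ^ D n) = ∏ n ∈ img, T n ^ D n := by
    have h1 : ∀ n : ℕ, (∏ᶠ (_ : 1 ≤ n), T n ^ D n) = if 1 ≤ n then T n ^ D n else 1 :=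
      fun n => finprod_eq_if
    rw [finprod_congr h1]
    refine (finprod_eq_prod_of_mulSupport_subset (s := img) _ ?_).trans ?_
    · intro n hn
      simp only [Function.mem_mulSupport] at hn
      by_cases h1n : 1 ≤ n
      · rw [if_pos h1n] at hn
        have hD0 : D n ≠ 0 := fun h => by rw [h, pow_zero] at hn; exact hn rfl
        have hne : Nonempty {C : Quotient (orbitRel (zpowers g) K) // nO C = n} := by
          by_contra hne
          rw [not_nonempty_iff] at hne
          exact hD0 Nat.card_of_isEmpty
        obtain ⟨⟨C, hC⟩⟩ := hne
        rw [himg]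
        exact Finset.mem_coe.2 (hC ▸ Finset.mem_image_of_mem nO (Finset.mem_univ C))
      · rw [if_neg h1n] at hn; exact absurd rfl hn
    · refine Finset.prod_congr rfl fun n hn => ?_
      rw [if_pos]
      obtain ⟨C, -, rfl⟩ := Finset.mem_image.1 hn
      exact hpos C
  rw [hgrp, hfin]
  exact Finset.prod_congr rfl fun n _ => by rw [hDcard n]
end

section
/- Let M be a finite set and f : M → M a function. Then in the polynomial ring ℤ[q]: ∑_{A ⊆ M, f(A) = A} q^{#A} = ∏_{m=1}^{#M} (1 + q^m)^{D_m(f)}, where the sum runs over all subsets A of M (including the empty set) whose image f(A) = { f(x) : x ∈ A } equals A. -/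
section Aux

open Finset Function

variable {M : Type*} [DecidableEq M] {f : M → M}

lemma orbit_of_mem {m : ℕ} {s : Finset M} (hm : 0 < m)
    (h : IsPeriodicOrbit f m s) {y : M} (hy : y ∈ s) :
    s = (Finset.range m).image (fun i => f^[i] y) ∧ f^[m] y = y := by
  obtain ⟨x, hs, hcard, hx⟩ := h
  have hper : Function.IsPeriodicPt f m x := hx
  obtain ⟨i, hi, hiy⟩ : ∃ i < m, f^[i] x = y := by
    simpa [hs] using hy
  have hy' : f^[m] y = y := by
    rw [← hiy, ← Function.iterate_add_apply, Nat.add_comm, Function.iterate_add_apply, hx]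
  refine ⟨?_, hy'⟩
  ext z
  simp only [hs, mem_image, mem_range]
  constructor
  · rintro ⟨r, hr, rfl⟩
    refine ⟨(m + r - i) % m, Nat.mod_lt _ hm, ?_⟩
    rw [← hiy, ← Function.iterate_add_apply]
    have h2 : ((m + r - i) % m + i) % m = r := by
      rw [Nat.mod_add_mod, Nat.sub_add_cancel (by omega), Nat.add_mod_left,
        Nat.mod_eq_of_lt hr]
    conv_rhs => rw [← h2]
    exact (hper.iterate_mod_apply _).symm
  · rintro ⟨j, hj, rfl⟩
    refine ⟨(j + i) % m, Nat.mod_lt _ hm, ?_⟩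
    rw [hper.iterate_mod_apply, ← hiy, ← Function.iterate_add_apply]

lemma isPeriodicOrbit_of_mem {m : ℕ} {s : Finset M} (hm : 0 < m)
    (h : IsPeriodicOrbit f m s) {y : M} (hy : y ∈ s) : 
    f^[m] y = y ∧ s = (Finset.range m).image (fun i => f^[i] y) :=
  ⟨(orbit_of_mem hm h hy).2, (orbit_of_mem hm h hy).1⟩

lemma orbit_eq_of_mem_inter {m n : ℕ} {s t : Finset M} (hm : 0 < m) (hn : 0 < n)
    (hs : IsPeriodicOrbit f m s) (ht : IsPeriodicOrbit f n t) {y : M}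
    (hys : y ∈ s) (hyt : y ∈ t) : s = t := by
  obtain ⟨hs', hy1⟩ := orbit_of_mem hm hs hys
  obtain ⟨ht', hy2⟩ := orbit_of_mem hn ht hyt
  have h1 : Function.IsPeriodicPt f m y := hy1
  have h2 : Function.IsPeriodicPt f n y := hy2
  ext z
  simp only [hs', ht', mem_image, mem_range]
  constructor
  · rintro ⟨j, hj, rfl⟩
    exact ⟨j % n, Nat.mod_lt _ hn, h2.iterate_mod_apply j⟩
  · rintro ⟨j, hj, rfl⟩
    exact ⟨j % m, Nat.mod_lt _ hm, h1.iterate_mod_apply j⟩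

lemma image_eq_self_of_orbit {m : ℕ} {s : Finset M} (hm : 0 < m)
    (h : IsPeriodicOrbit f m s) : s.image f = s := by
  obtain ⟨x, hs, hcard, hx⟩ := h
  have hper : Function.IsPeriodicPt f m x := hx
  ext z
  simp only [hs, mem_image, mem_range, image_image, Function.comp_apply]
  constructor
  · rintro ⟨i, hi, rfl⟩
    refine ⟨(i + 1) % m, Nat.mod_lt _ hm, ?_⟩
    rw [hper.iterate_mod_apply, Function.iterate_succ_apply']
  · rintro ⟨r, hr, rfl⟩
    refine ⟨(r + m - 1) % m, Nat.mod_lt _ hm, ?_⟩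
    rw [show f (f^[(r + m - 1) % m] x) = f^[(r + m - 1) % m + 1] x from
      (Function.iterate_succ_apply' f _ x).symm]
    have h2 : ((r + m - 1) % m + 1) % m = r := by
      rw [Nat.mod_add_mod, Nat.sub_add_cancel (by omega), Nat.add_mod_right,
        Nat.mod_eq_of_lt hr]
    conv_rhs => rw [← h2]
    exact (hper.iterate_mod_apply _).symm

lemma exists_orbit {A : Finset M} (hA : A.image f = A) {x : M} (hx : x ∈ A) :
    ∃ m s, 0 < m ∧ IsPeriodicOrbit f m s ∧ x ∈ s ∧ s ⊆ A := by
  have hmaps : ∀ a ∈ A, f a ∈ A := fun a ha => hA ▸ mem_image_of_mem f ha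
  have hiter : ∀ i, f^[i] x ∈ A := by
    intro i
    induction i with
    | zero => simpa using hx
    | succ n ih => rw [Function.iterate_succ_apply']; exact hmaps _ ih
  have hinj : Set.InjOn f A := injOn_of_card_image_eq (by rw [hA])
  have cancel : ∀ (k : ℕ) (a b : M), a ∈ A → b ∈ A →
      (∀ i, f^[i] a ∈ A) → (∀ i, f^[i] b ∈ A) → f^[k] a = f^[k] b → a = b := by
    intro k
    induction k with
    | zero => intro a b _ _ _ _ h; simpa using h
    | succ n ih =>
      intro a b ha hb hia hib h
      rw [Function.iterate_succ_apply, Function.iterate_succ_apply] at h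
      have := ih (f a) (f b) (hmaps a ha) (hmaps b hb)
        (fun i => by rw [← Function.iterate_succ_apply]; exact hia (i+1))
        (fun i => by rw [← Function.iterate_succ_apply]; exact hib (i+1)) h
      exact hinj ha hb this
  obtain ⟨i, hi, j, hj, hne, heq⟩ :=
    exists_ne_map_eq_of_card_lt_of_maps_to (t := A)
      (s := Finset.range (A.card + 1)) (by simp) (fun i _ => hiter i)
  wlog hij : i < j generalizing i j
  · exact this j hj i hi hne.symm heq.symm (by omega)
  have hp : f^[j - i] x = x := by
    apply cancel i _ _ (hiter _) hx (fun k => by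
      rw [← Function.iterate_add_apply]; exact hiter _) hiter
    rw [← Function.iterate_add_apply, Nat.add_sub_cancel' (le_of_lt hij), heq]
  have hmem : x ∈ periodicPts f := mk_mem_periodicPts (by omega) hp
  set m := minimalPeriod f x with hm
  have hmpos : 0 < m := minimalPeriod_pos_of_mem_periodicPts hmem
  refine ⟨m, (Finset.range m).image (fun i => f^[i] x), hmpos, ⟨x, rfl, ?_, isPeriodicPt_minimalPeriod f x⟩, ?_, ?_⟩
  · rw [Finset.card_image_of_injOn, card_range]
    rw [coe_range]
    exact iterate_injOn_Iio_minimalPeriod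
  · exact mem_image.2 ⟨0, by simpa using hmpos, rfl⟩
  · intro z hz
    obtain ⟨k, _, rfl⟩ := mem_image.1 hz
    exact hiter k

end Aux

theorem sum_invariant_subsets_eq_prod
    {M : Type*} [Fintype M] [DecidableEq M] (f : M → M) :
    ∑ A ∈ Finset.univ.filter (fun A : Finset M => A.image f = A),
        (Polynomial.X : Polynomial ℤ) ^ A.card =
      ∏ m ∈ Finset.Icc 1 (Fintype.card M),
        ((1 + (Polynomial.X : Polynomial ℤ) ^ m) ^ doldD f m) := by
  classical
  set X : Polynomial ℤ := Polynomial.X with hX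
  set N := Fintype.card M with hN
  set P : Finset (Finset M) :=
    Finset.univ.filter (fun s => ∃ m, 0 < m ∧ IsPeriodicOrbit f m s) with hP
  have hPmem : ∀ s : Finset M, s ∈ P ↔ ∃ m, 0 < m ∧ IsPeriodicOrbit f m s := by
    intro s; simp [hP]
  have hcardpos : ∀ s ∈ P, 0 < s.card := by
    intro s hs
    obtain ⟨m, hm, x, h1, h2, h3⟩ := (hPmem s).1 hs
    omega
  have heqorb : ∀ s ∈ P, ∀ t ∈ P, ∀ y, y ∈ s → y ∈ t → s = t := by
    intro s hs t ht y hys hyt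
    obtain ⟨m, hm, hos⟩ := (hPmem s).1 hs
    obtain ⟨n, hn, hot⟩ := (hPmem t).1 ht
    exact orbit_eq_of_mem_inter hm hn hos hot hys hyt
  have hdisj : ∀ s ∈ P, ∀ t ∈ P, s ≠ t → Disjoint s t := by
    intro s hs t ht hne
    rw [Finset.disjoint_left]
    intro y hys hyt
    exact hne (heqorb s hs t ht y hys hyt)
  have himg : ∀ s ∈ P, s.image f = s := by
    intro s hs
    obtain ⟨m, hm, hos⟩ := (hPmem s).1 hs
    exact image_eq_self_of_orbit hm hos
  have hD : ∀ m ∈ Finset.Icc 1 N, doldD f m = (P.filter (fun s => s.card = m)).card := by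
    intro m hm
    simp only [Finset.mem_Icc] at hm
    have heq : P.filter (fun s => s.card = m)
        = Finset.univ.filter (fun s => IsPeriodicOrbit f m s) := by
      ext s
      simp only [Finset.mem_filter, Finset.mem_univ, true_and, hPmem]
      constructor
      · rintro ⟨⟨m', hm', ho⟩, hc⟩
        obtain ⟨x, h1, h2, h3⟩ := ho
        have : m' = m := by omega
        subst this
        exact ⟨x, h1, h2, h3⟩
      · intro ho
        obtain ⟨x, h1, h2, h3⟩ := ho
        exact ⟨⟨m, by omega, ⟨x, h1, h2, h3⟩⟩, h2⟩
    rw [doldD, Nat.card_eq_fintype_card, Fintype.card_subtype, heq]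
  -- RHS as product over all orbits
  have step1 : ∏ m ∈ Finset.Icc 1 N, ((1 + X ^ m) ^ doldD f m)
      = ∏ s ∈ P, (X ^ s.card + 1) := by
    rw [← Finset.prod_fiberwise_of_maps_to
      (g := Finset.card) (t := Finset.Icc 1 N)
      (fun s hs => Finset.mem_Icc.2 ⟨hcardpos s hs, Finset.card_le_univ s⟩)
      (fun s => X ^ s.card + 1)]
    apply Finset.prod_congr rfl
    intro m hm
    have h1 : ∀ s ∈ P.filter (fun s => s.card = m), X ^ s.card + 1 = 1 + X ^ m :=
      fun s hs => by rw [(Finset.mem_filter.1 hs).2, add_comm]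
    rw [Finset.prod_congr rfl h1, Finset.prod_const, hD m hm]
  -- expand via prod_add
  have step2 : ∏ s ∈ P, (X ^ s.card + 1)
      = ∑ S ∈ P.powerset, X ^ (S.biUnion id).card := by
    rw [Finset.prod_add]
    apply Finset.sum_congr rfl
    intro S hS
    have hSP : S ⊆ P := Finset.mem_powerset.1 hS
    rw [Finset.prod_const_one, mul_one, Finset.prod_pow_eq_pow_sum,
      Finset.card_biUnion (t := id) (fun x hx y hy hxy => hdisj x (hSP hx) y (hSP hy) hxy)]
    simp
  rw [step1, step2]
  have hleft : ∀ A : Finset M, A.image f = A → (P.filter (fun s => s ⊆ A)).biUnion id = A := by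
    intro A hA
    ext x
    constructor
    · intro hx
      obtain ⟨s, hs, hxs⟩ := Finset.mem_biUnion.1 hx
      exact (Finset.mem_filter.1 hs).2 hxs
    · intro hx
      obtain ⟨m, s, hm, ho, hxs, hsA⟩ := exists_orbit hA hx
      refine Finset.mem_biUnion.2 ⟨s, ?_, hxs⟩
      exact Finset.mem_filter.2 ⟨(hPmem s).2 ⟨m, hm, ho⟩, hsA⟩
  -- LHS : bijection between invariant sets and subsets of P
  apply Finset.sum_nbij' (i := fun A => P.filter (fun s => s ⊆ A))
    (j := fun S => S.biUnion id)
  · intro A hA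
    exact Finset.mem_powerset.2 (Finset.filter_subset _ _)
  · intro S hS
    have hSP : S ⊆ P := Finset.mem_powerset.1 hS
    simp only [Finset.mem_filter, Finset.mem_univ, true_and]
    rw [Finset.biUnion_image]
    apply Finset.biUnion_congr rfl
    intro s hs
    exact himg s (hSP hs)
  · intro A hA
    simp only [Finset.mem_filter, Finset.mem_univ, true_and] at hA
    exact hleft A hA
  · intro S hS
    have hSP : S ⊆ P := Finset.mem_powerset.1 hS
    ext s
    simp only [Finset.mem_filter]
    constructor
    · rintro ⟨hsP, hsub⟩
      obtain ⟨y, hy⟩ := Finset.card_pos.1 (hcardpos s hsP)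
      obtain ⟨t, ht, hyt⟩ := Finset.mem_biUnion.1 (hsub hy)
      rw [heqorb s hsP t (hSP ht) y hy hyt]
      exact ht
    · intro hs
      exact ⟨hSP hs, Finset.subset_biUnion_of_mem id hs⟩
  · intro A hA
    simp only [Finset.mem_filter, Finset.mem_univ, true_and] at hA
    rw [hleft A hA]
end

section
/- Let M be a finite set, f : M → M a function, and n an integer. Every subset A ⊆ M with f(A) = A is a disjoint union of periodic orbits of f; let c(A) denote the number of periodic orbits contained in A. Then in the polynomial ring ℤ[q]: ∑_{A ⊆ M, f(A) = A} n^{c(A)} · q^{#A} = ∏_{m=1}^{#M} (1 + n·q^m)^{D_m(f)}. -/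
open Function Finset Polynomial

/-- `orbitCount f A` is the number of periodic orbits of `f` contained in `A`. -/
noncomputable def orbitCount {M : Type*} [Fintype M] [DecidableEq M]
    (f : M → M) (A : Finset M) : ℕ :=
  Nat.card {s : Finset M // (∃ m, 1 ≤ m ∧ IsPeriodicOrbit f m s) ∧ s ⊆ A}

section Aux

variable {M : Type*} [DecidableEq M] {f : M → M}

lemma natCard_filter {α : Type*} [Fintype α] (p : α → Prop) [DecidablePred p] :
    Nat.card {x // p x} = (Finset.univ.filter p).card := by
  rw [Nat.card_eq_fintype_card, Fintype.card_subtype]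

lemma orbit_shift {m : ℕ} (hm : 1 ≤ m) {x : M} (hper : f^[m] x = x) {i : ℕ} (hi : i < m) :
    f^[m] (f^[i] x) = f^[i] x ∧
      (Finset.range m).image (fun j => f^[j] (f^[i] x)) =
        (Finset.range m).image (fun j => f^[j] x) := by
  have hp : Function.IsPeriodicPt f m x := hper
  constructor
  · rw [← Function.iterate_add_apply, Nat.add_comm, Function.iterate_add_apply, hper]
  · apply Finset.Subset.antisymm
    · intro z hz
      simp only [Finset.mem_image, Finset.mem_range] at hz ⊢
      obtain ⟨j, hj, rfl⟩ := hz
      refine ⟨(j + i) % m, Nat.mod_lt _ hm, ?_⟩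
      rw [hp.iterate_mod_apply, Function.iterate_add_apply]
    · intro z hz
      simp only [Finset.mem_image, Finset.mem_range] at hz ⊢
      obtain ⟨k, hk, rfl⟩ := hz
      refine ⟨(m + k - i) % m, Nat.mod_lt _ hm, ?_⟩
      have harith : ((m + k - i) % m + i) % m = k := by
        rw [Nat.mod_add_mod]
        have h1 : m + k - i + i = m + k := by omega
        rw [h1, Nat.add_mod_left, Nat.mod_eq_of_lt hk]
      calc f^[(m + k - i) % m] (f^[i] x) = f^[(m + k - i) % m + i] x :=
            (Function.iterate_add_apply f _ i x).symm
        _ = f^[((m + k - i) % m + i) % m] x := (hp.iterate_mod_apply _).symm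
        _ = f^[k] x := by rw [harith]

lemma orbit_rep_of_mem {s : Finset M} (hs : ∃ m, 1 ≤ m ∧ IsPeriodicOrbit f m s)
    {y : M} (hy : y ∈ s) :
    f^[s.card] y = y ∧ s = (Finset.range s.card).image (fun j => f^[j] y) := by
  obtain ⟨m, hm, x, rfl, hcard, hper⟩ := hs
  rw [hcard]
  simp only [Finset.mem_image, Finset.mem_range] at hy
  obtain ⟨i, hi, rfl⟩ := hy
  obtain ⟨h1, h2⟩ := orbit_shift hm hper hi
  exact ⟨h1, h2.symm⟩

lemma orbit_eq_of_mem {s t : Finset M} (hs : ∃ m, 1 ≤ m ∧ IsPeriodicOrbit f m s)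
    (ht : ∃ m, 1 ≤ m ∧ IsPeriodicOrbit f m t) {y : M} (hys : y ∈ s) (hyt : y ∈ t) :
    s = t := by
  obtain ⟨hps, hsy⟩ := orbit_rep_of_mem hs hys
  obtain ⟨hpt, hty⟩ := orbit_rep_of_mem ht hyt
  have hcs : 0 < s.card := Finset.card_pos.2 ⟨y, hys⟩
  have hct : 0 < t.card := Finset.card_pos.2 ⟨y, hyt⟩
  have hpt' : Function.IsPeriodicPt f t.card y := hpt
  have hps' : Function.IsPeriodicPt f s.card y := hps
  apply Finset.Subset.antisymm
  · intro z hz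
    rw [hsy] at hz
    rw [hty]
    simp only [Finset.mem_image, Finset.mem_range] at hz ⊢
    obtain ⟨j, hj, rfl⟩ := hz
    exact ⟨j % t.card, Nat.mod_lt _ hct, hpt'.iterate_mod_apply j⟩
  · intro z hz
    rw [hty] at hz
    rw [hsy]
    simp only [Finset.mem_image, Finset.mem_range] at hz ⊢
    obtain ⟨j, hj, rfl⟩ := hz
    exact ⟨j % s.card, Nat.mod_lt _ hcs, hps'.iterate_mod_apply j⟩

lemma orbit_image_self {s : Finset M} (hs : ∃ m, 1 ≤ m ∧ IsPeriodicOrbit f m s) :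
    s.image f = s := by
  obtain ⟨m, hm, x, rfl, hcard, hper⟩ := hs
  have hp : Function.IsPeriodicPt f m x := hper
  apply Finset.Subset.antisymm
  · intro z hz
    simp only [Finset.mem_image, Finset.mem_range, exists_exists_and_eq_and] at hz ⊢
    obtain ⟨i, hi, rfl⟩ := hz
    refine ⟨(i + 1) % m, Nat.mod_lt _ hm, ?_⟩
    rw [hp.iterate_mod_apply, Function.iterate_succ_apply']
  · intro z hz
    simp only [Finset.mem_image, Finset.mem_range, exists_exists_and_eq_and] at hz ⊢
    obtain ⟨k, hk, rfl⟩ := hz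
    refine ⟨(k + m - 1) % m, Nat.mod_lt _ hm, ?_⟩
    have harith : ((k + m - 1) % m + 1) % m = k := by
      rw [Nat.mod_add_mod]
      have h1 : k + m - 1 + 1 = k + m := by omega
      rw [h1, Nat.add_mod_right, Nat.mod_eq_of_lt hk]
    calc f (f^[(k + m - 1) % m] x) = f^[(k + m - 1) % m + 1] x :=
          (Function.iterate_succ_apply' f _ x).symm
      _ = f^[((k + m - 1) % m + 1) % m] x := (hp.iterate_mod_apply _).symm
      _ = f^[k] x := by rw [harith]

lemma exists_orbit_of_invariant (A : Finset M) (hA : A.image f = A) {x : M} (hx : x ∈ A) :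
    ∃ s : Finset M, (∃ m, 1 ≤ m ∧ IsPeriodicOrbit f m s) ∧ s ⊆ A ∧ x ∈ s := by
  have hA' : f '' ↑A = ↑A := by rw [← Finset.coe_image, hA]
  have hmaps : Set.MapsTo f ↑A ↑A := by
    intro a ha
    rw [← hA']
    exact Set.mem_image_of_mem f ha
  have hsurj : Set.SurjOn f ↑A ↑A := by rw [Set.SurjOn, hA']
  have hinj : Set.InjOn f ↑A :=
    ((A.finite_toSet.surjOn_iff_bijOn_of_mapsTo hmaps).mp hsurj).injOn
  have hiter : ∀ k, f^[k] x ∈ A := fun k => hmaps.iterate k hx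
  obtain ⟨i, -, j, -, hne, heq⟩ :=
    Finset.exists_ne_map_eq_of_card_lt_of_maps_to (s := Finset.range (A.card + 1)) (t := A)
      (by simp) (fun k _ => hiter k)
  have key : ∀ i j : ℕ, i < j → f^[i] x = f^[j] x → Function.IsPeriodicPt f (j - i) x := by
    intro i j hlt heq
    have h1 : f^[i] (f^[j - i] x) = f^[i] x := by
      rw [← Function.iterate_add_apply]
      have : i + (j - i) = j := by omega
      rw [this, ← heq]
    exact (hinj.iterate hmaps i) (hiter _) hx h1
  have hxp : x ∈ Function.periodicPts f := by
    rcases lt_or_gt_of_ne hne with h | h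
    · exact ⟨j - i, by omega, key i j h heq⟩
    · exact ⟨i - j, by omega, key j i h heq.symm⟩
  have hm : 0 < Function.minimalPeriod f x := Function.minimalPeriod_pos_of_mem_periodicPts hxp
  refine ⟨(Finset.range (Function.minimalPeriod f x)).image (fun i => f^[i] x),
    ⟨Function.minimalPeriod f x, hm, x, rfl, ?_, Function.iterate_minimalPeriod⟩, ?_, ?_⟩
  · rw [Finset.card_image_of_injOn, Finset.card_range]
    rw [Finset.coe_range]
    exact Function.iterate_injOn_Iio_minimalPeriod
  · intro z hz
    simp only [Finset.mem_image, Finset.mem_range] at hz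
    obtain ⟨i, -, rfl⟩ := hz
    exact hiter i
  · exact Finset.mem_image.mpr ⟨0, Finset.mem_range.mpr hm, rfl⟩

lemma orbit_disjoint {s t : Finset M} (hs : ∃ m, 1 ≤ m ∧ IsPeriodicOrbit f m s)
    (ht : ∃ m, 1 ≤ m ∧ IsPeriodicOrbit f m t) (hne : s ≠ t) : Disjoint s t := by
  by_contra hdis
  obtain ⟨y, hys, hyt⟩ := Finset.not_disjoint_iff.mp hdis
  exact hne (orbit_eq_of_mem hs ht hys hyt)

lemma orbit_card_eq {m : ℕ} {s : Finset M} (h : IsPeriodicOrbit f m s) : s.card = m := by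
  obtain ⟨x, -, hcard, -⟩ := h
  exact hcard

end Aux

/-- Every subset `A ⊆ M` with `f(A) = A` is a disjoint union of periodic orbits of `f`
(first two conjuncts), and `∑_{A : f(A) = A} n^{c(A)} q^{#A} = ∏_m (1 + n q^m)^{D_m(f)}`,
where `c(A)` is the number of periodic orbits contained in `A`. -/
theorem sum_invariant_subsets_weighted_eq_prod
    {M : Type*} [Fintype M] [DecidableEq M] (f : M → M) (n : ℤ) :
    (∀ A : Finset M, A.image f = A → ∀ x ∈ A, ∃ s : Finset M,
        (∃ m, 1 ≤ m ∧ IsPeriodicOrbit f m s) ∧ s ⊆ A ∧ x ∈ s) ∧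
    (∀ s t : Finset M, (∃ m, 1 ≤ m ∧ IsPeriodicOrbit f m s) →
        (∃ m, 1 ≤ m ∧ IsPeriodicOrbit f m t) → s ≠ t → Disjoint s t) ∧
    ∑ A ∈ Finset.univ.filter (fun A : Finset M => A.image f = A),
        Polynomial.C (n ^ orbitCount f A) * (Polynomial.X : Polynomial ℤ) ^ A.card =
      ∏ m ∈ Finset.Icc 1 (Fintype.card M),
        ((1 + Polynomial.C n * (Polynomial.X : Polynomial ℤ) ^ m) ^ doldD f m) := by
  classical
  refine ⟨fun A hA x hx => exists_orbit_of_invariant A hA hx,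
    fun s t hs ht hne => orbit_disjoint hs ht hne, ?_⟩
  set O : Finset (Finset M) :=
    Finset.univ.filter (fun s => ∃ m, 1 ≤ m ∧ IsPeriodicOrbit f m s) with hO
  have hOmem : ∀ s : Finset M, s ∈ O ↔ ∃ m, 1 ≤ m ∧ IsPeriodicOrbit f m s := by
    intro s; simp [hO]
  -- the union of a set of orbits is invariant
  have hU : ∀ S : Finset (Finset M), S ⊆ O → (S.biUnion id).image f = S.biUnion id := by
    intro S hS
    rw [Finset.biUnion_image]
    exact Finset.biUnion_congr rfl fun s hs => orbit_image_self ((hOmem s).1 (hS hs))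
  -- recovering the set of orbits from the union
  have hrec : ∀ S : Finset (Finset M), S ⊆ O →
      O.filter (fun s => s ⊆ S.biUnion id) = S := by
    intro S hS
    ext s
    simp only [Finset.mem_filter]
    constructor
    · rintro ⟨hsO, hsub⟩
      obtain ⟨m, hm, horb⟩ := (hOmem s).1 hsO
      have hne : s.Nonempty := Finset.card_pos.1 (by rw [orbit_card_eq horb]; omega)
      obtain ⟨y, hy⟩ := hne
      obtain ⟨t, htS, hyt⟩ := Finset.mem_biUnion.mp (hsub hy)
      have : s = t := orbit_eq_of_mem ⟨m, hm, horb⟩ ((hOmem t).1 (hS htS)) hy hyt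
      rwa [this]
    · intro hsS
      exact ⟨hS hsS, Finset.subset_biUnion_of_mem id hsS⟩
  -- left inverse: an invariant set is the union of its orbits
  have hleft : ∀ A : Finset M, A.image f = A →
      (O.filter (fun s => s ⊆ A)).biUnion id = A := by
    intro A hA
    apply Finset.Subset.antisymm
    · intro z hz
      obtain ⟨t, htm, hzt⟩ := Finset.mem_biUnion.mp hz
      exact (Finset.mem_filter.mp htm).2 hzt
    · intro x hx
      obtain ⟨s, horb, hsub, hxs⟩ := exists_orbit_of_invariant A hA hx
      exact Finset.mem_biUnion.mpr
        ⟨s, Finset.mem_filter.mpr ⟨(hOmem s).2 horb, hsub⟩, hxs⟩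
  have hpd : ∀ S : Finset (Finset M), S ⊆ O →
      ∀ s ∈ S, ∀ t ∈ S, s ≠ t → Disjoint s t := by
    intro S hS s hs t ht hne
    exact orbit_disjoint ((hOmem s).1 (hS hs)) ((hOmem t).1 (hS ht)) hne
  have hcount : ∀ A : Finset M, orbitCount f A = (O.filter (fun s => s ⊆ A)).card := by
    intro A
    rw [orbitCount, natCard_filter, hO, Finset.filter_filter]
  -- step 1: rewrite sum over invariant sets as sum over sets of orbits
  have step1 : ∑ A ∈ Finset.univ.filter (fun A : Finset M => A.image f = A),
      Polynomial.C (n ^ orbitCount f A) * (Polynomial.X : Polynomial ℤ) ^ A.card =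
      ∑ S ∈ O.powerset, ∏ s ∈ S, (Polynomial.C n * (Polynomial.X : Polynomial ℤ) ^ s.card) := by
    refine Finset.sum_nbij' (fun A => O.filter (fun s => s ⊆ A)) (fun S => S.biUnion id)
      ?_ ?_ ?_ ?_ ?_
    · intro A hA
      exact Finset.mem_powerset.mpr (Finset.filter_subset _ _)
    · intro S hS
      simp only [Finset.mem_filter, Finset.mem_univ, true_and]
      exact hU S (Finset.mem_powerset.mp hS)
    · intro A hA
      exact hleft A (Finset.mem_filter.mp hA).2
    · intro S hS
      exact hrec S (Finset.mem_powerset.mp hS)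
    · intro A hA
      have hAinv := (Finset.mem_filter.mp hA).2
      have h1 : A.card = ∑ s ∈ O.filter (fun s => s ⊆ A), s.card := by
        conv_lhs => rw [← hleft A hAinv]
        exact Finset.card_biUnion (hpd _ (Finset.filter_subset _ _))
      rw [hcount A, h1, Finset.prod_mul_distrib, Finset.prod_const,
        Finset.prod_pow_eq_pow_sum, ← Polynomial.C_pow]
  -- step 2: the sum over subsets of O is the product over O
  have step2 : ∑ S ∈ O.powerset,
      ∏ s ∈ S, (Polynomial.C n * (Polynomial.X : Polynomial ℤ) ^ s.card) =
      ∏ s ∈ O, (1 + Polynomial.C n * (Polynomial.X : Polynomial ℤ) ^ s.card) := by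
    have := Finset.prod_add (fun s : Finset M => Polynomial.C n *
      (Polynomial.X : Polynomial ℤ) ^ s.card) (fun _ => (1 : Polynomial ℤ)) O
    simp only [Finset.prod_const_one, mul_one] at this
    rw [← this]
    exact Finset.prod_congr rfl fun s _ => (add_comm _ _)
  -- step 3: group orbits by length
  have step3 : ∏ s ∈ O, (1 + Polynomial.C n * (Polynomial.X : Polynomial ℤ) ^ s.card) =
      ∏ m ∈ Finset.Icc 1 (Fintype.card M),
        ((1 + Polynomial.C n * (Polynomial.X : Polynomial ℤ) ^ m) ^ doldD f m) := by
    have hmaps : ∀ s ∈ O, s.card ∈ Finset.Icc 1 (Fintype.card M) := by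
      intro s hs
      obtain ⟨m, hm, horb⟩ := (hOmem s).1 hs
      rw [Finset.mem_Icc, orbit_card_eq horb]
      exact ⟨hm, (orbit_card_eq horb) ▸ s.card_le_univ⟩
    rw [← Finset.prod_fiberwise_of_maps_to hmaps
      (fun s => 1 + Polynomial.C n * (Polynomial.X : Polynomial ℤ) ^ s.card)]
    refine Finset.prod_congr rfl fun m hm => ?_
    have hm1 : 1 ≤ m := (Finset.mem_Icc.mp hm).1
    have hfib : O.filter (fun s => s.card = m) =
        Finset.univ.filter (IsPeriodicOrbit f m) := by
      ext s
      simp only [Finset.mem_filter, Finset.mem_univ, true_and, hOmem s]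
      constructor
      · rintro ⟨⟨m', hm', horb'⟩, hc⟩
        have : m' = m := by rw [← orbit_card_eq horb', hc]
        rwa [← this]
      · intro horb
        exact ⟨⟨m, hm1, horb⟩, orbit_card_eq horb⟩
    have hD : doldD f m = (O.filter (fun s => s.card = m)).card := by
      rw [doldD, natCard_filter, hfib]
    rw [hD]
    rw [Finset.prod_congr rfl (fun s hs => by rw [(Finset.mem_filter.mp hs).2]),
      Finset.prod_const]
  rw [step1, step2, step3]
end

section
/- Let d be an integer and l ≥ 1 an integer. In ℤ[[q]] the power series 1 − d·q^{l+1} is invertible, and the coefficient of q^k in the power series (1 + q + ⋯ + q^l) · (1 − d·q) · (1 − d·q^{l+1})^{−1} equals: 1 if k = 0; (1 − d)·d^j if j·(l+1) < k < (j+1)·(l+1) for some integer j ≥ 0; and 0 if k > 0 and (l+1) divides k. -/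
open PowerSeries

private lemma coeff_mul_one_sub_C_X_pow (p : PowerSeries ℤ) (c : ℤ) (m k : ℕ) :
    PowerSeries.coeff k (p * (1 - PowerSeries.C c * PowerSeries.X ^ m)) =
      PowerSeries.coeff k p -
        (if m ≤ k then c * PowerSeries.coeff (k - m) p else 0) := by
  rw [mul_sub, mul_one, map_sub]
  congr 1
  rw [show p * (PowerSeries.C c * PowerSeries.X ^ m)
      = PowerSeries.C c * (p * PowerSeries.X ^ m) by ring,
    PowerSeries.coeff_C_mul, PowerSeries.coeff_mul_X_pow']
  split <;> simp

private lemma coeff_geom (n k : ℕ) :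
    PowerSeries.coeff k (∑ i ∈ Finset.range n, (PowerSeries.X : PowerSeries ℤ) ^ i) =
      if k < n then 1 else 0 := by
  rw [map_sum]
  simp only [PowerSeries.coeff_X_pow, Finset.sum_ite_eq, Finset.mem_range]

theorem coeff_geom_mul_inv
    (d : ℤ) (l : ℕ) (hl : 1 ≤ l) :
    IsUnit (1 - PowerSeries.C d * (PowerSeries.X : PowerSeries ℤ) ^ (l + 1)) ∧
    ∀ k : ℕ,
      PowerSeries.coeff k
          ((∑ i ∈ Finset.range (l + 1), (PowerSeries.X : PowerSeries ℤ) ^ i) *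
            (1 - PowerSeries.C d * PowerSeries.X) *
            Ring.inverse (1 - PowerSeries.C d * (PowerSeries.X : PowerSeries ℤ) ^ (l + 1))) =
        if k = 0 then 1
        else if (l + 1) ∣ k then 0
        else (1 - d) * d ^ (k / (l + 1)) := by
  set n := l + 1 with hn
  have hu : IsUnit (1 - PowerSeries.C d * (PowerSeries.X : PowerSeries ℤ) ^ n) := by
    rw [PowerSeries.isUnit_iff_constantCoeff]
    simp [hn]
  refine ⟨hu, ?_⟩
  set F : PowerSeries ℤ := PowerSeries.mk (fun k =>
    if k = 0 then 1 else if n ∣ k then 0 else (1 - d) * d ^ (k / n)) with hF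
  have key : (∑ i ∈ Finset.range n, (PowerSeries.X : PowerSeries ℤ) ^ i) *
      (1 - PowerSeries.C d * PowerSeries.X)
      = F * (1 - PowerSeries.C d * (PowerSeries.X : PowerSeries ℤ) ^ n) := by
    ext k
    rw [show (1 - PowerSeries.C d * PowerSeries.X)
        = (1 - PowerSeries.C d * PowerSeries.X ^ 1) by rw [pow_one],
      coeff_mul_one_sub_C_X_pow, coeff_mul_one_sub_C_X_pow]
    simp only [hF, PowerSeries.coeff_mk, coeff_geom]
    have h2 : 2 ≤ n := by omega
    rcases Nat.lt_or_ge k n with hk | hk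
    · -- k < n
      rcases Nat.eq_zero_or_pos k with rfl | hk0
      · simp [hn]
      · have hnd : ¬ n ∣ k := fun h => absurd (Nat.le_of_dvd hk0 h) (by omega)
        have hq : k / n = 0 := Nat.div_eq_of_lt hk
        rw [if_pos hk, if_pos (show 1 ≤ k by omega), if_pos (show k - 1 < n by omega),
          if_neg (show ¬ k = 0 by omega), if_neg hnd,
          if_neg (show ¬ n ≤ k by omega), hq]
        ring
    · -- n ≤ k
      rcases eq_or_lt_of_le hk with heq | hk'
      · -- k = n
        subst heq
        rw [if_neg (lt_irrefl n), if_pos (show 1 ≤ n by omega),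
          if_pos (show n - 1 < n by omega), if_neg (show ¬ n = 0 by omega),
          if_pos dvd_rfl, if_pos le_rfl, Nat.sub_self, if_pos rfl]
      · -- n < k
        have h1k : 1 ≤ k := by omega
        have hkn0 : k - n ≠ 0 := by omega
        rw [if_neg (show ¬ k < n by omega), if_pos h1k,
          if_neg (show ¬ k - 1 < n by omega), if_neg (show ¬ k = 0 by omega),
          if_pos hk, if_neg hkn0]
        have hdvd : n ∣ k ↔ n ∣ (k - n) := by
          constructor
          · intro h; exact Nat.dvd_sub h dvd_rfl
          · intro h
            have := Nat.dvd_add h (dvd_refl n)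
            rwa [Nat.sub_add_cancel hk] at this
        by_cases hd : n ∣ k
        · rw [if_pos hd, if_pos (hdvd.mp hd)]
        · rw [if_neg hd, if_neg (fun h => hd (hdvd.mpr h))]
          have hq1 : 1 ≤ k / n := (Nat.one_le_div_iff (by omega)).mpr hk
          have hdivsub : (k - n) / n = k / n - 1 := by
            have hdm := Nat.div_add_mod k n
            have hr : k % n < n := Nat.mod_lt _ (by omega)
            have h5 : n * (k / n - 1) = n * (k / n) - n := by
              rw [Nat.mul_sub, mul_one]
            have h6 : n ≤ n * (k / n) := by
              calc n = n * 1 := (mul_one n).symm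
                _ ≤ n * (k / n) := Nat.mul_le_mul_left n hq1
            have h7 : k - n = n * (k / n - 1) + k % n := by omega
            rw [h7, Nat.mul_add_div (by omega), Nat.div_eq_of_lt hr, add_zero]
          rw [hdivsub]
          obtain ⟨q, hq⟩ : ∃ q, k / n = q + 1 := ⟨k / n - 1, by omega⟩
          rw [hq]
          simp only [Nat.add_sub_cancel, pow_succ]
          ring
  intro k
  rw [key, Ring.mul_inverse_cancel_right _ _ hu]
  simp [hF, PowerSeries.coeff_mk]
end
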